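/- arXiv:2006.10002 — 8 statements merged into one kernel-verified Lean document; each statement's English description precedes it below -/
import Mathlib

section
/- Splitting Lemma, part (1): Let G = (V,E,r) be a graph with V nonempty and let a be a nonzero agglomeration on G. Let m be the maximum value attained by a, i.e., m = max({a_V v : v ∈ V} ∪ {a_E e : e ∈ E}), and define b by b_V v = 1 if a_V v = m and b_V v = 0 otherwise, and b_E e = 1 if a_E e = m and b_E e = 0 otherwise. Then b is an agglomeration on G and there exists an agglomeration c on G with a = b + c. Part (2): the indicator of the support of a (the function equal to 1 on V_a and on E_a and 0 elsewhere) is an agglomeration on G and there exists an agglomeration c' on G with a = 1_{supp(a)} + c'. -/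
/-- An agglomeration on the graph given by `r : E → Sym2 V`. -/
def IsAgg {V E : Type*} (r : E → Sym2 V) (a : (V → ℕ) × (E → ℕ)) : Prop :=
  ∀ (e : E) (v : V), v ∈ r e → a.2 e ≤ a.1 v

/-- **Splitting lemma** for monoids of graph agglomerations. -/
theorem splitting_lemma {V E : Type*} [Fintype V] [Fintype E] [Nonempty V]
    (r : E → Sym2 V) (hr : ∀ e : E, ¬ (r e).IsDiag)
    (a : (V → ℕ) × (E → ℕ)) (ha : IsAgg r a) (ha0 : a ≠ 0)
    (m : ℕ) (hm : IsGreatest (Set.range a.1 ∪ Set.range a.2) m)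
    (b : (V → ℕ) × (E → ℕ))
    (hb : b = (fun v => if a.1 v = m then 1 else 0, fun e => if a.2 e = m then 1 else 0))
    (s : (V → ℕ) × (E → ℕ))
    (hs : s = (fun v => if 0 < a.1 v then 1 else 0, fun e => if 0 < a.2 e then 1 else 0)) :
    (IsAgg r b ∧ ∃ c : (V → ℕ) × (E → ℕ), IsAgg r c ∧ a = b + c) ∧
    (IsAgg r s ∧ ∃ c' : (V → ℕ) × (E → ℕ), IsAgg r c' ∧ a = s + c') := by
  obtain ⟨hmem, hub⟩ := hm
  have hmV : ∀ v, a.1 v ≤ m := fun v => hub (Or.inl ⟨v, rfl⟩)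
  have hmE : ∀ e, a.2 e ≤ m := fun e => hub (Or.inr ⟨e, rfl⟩)
  have hm0 : 0 < m := by
    rcases Nat.eq_zero_or_pos m with h | h
    · exfalso
      apply ha0
      have h1 : a.1 = 0 := funext fun v => by have := hmV v; simp only [Pi.zero_apply]; omega
      have h2 : a.2 = 0 := funext fun e => by have := hmE e; simp only [Pi.zero_apply]; omega
      exact Prod.ext h1 h2
    · exact h
  subst hb hs
  refine ⟨⟨?_, (fun v => a.1 v - (if a.1 v = m then 1 else 0),
      fun e => a.2 e - (if a.2 e = m then 1 else 0)), ?_, ?_⟩,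
    ?_, (fun v => a.1 v - (if 0 < a.1 v then 1 else 0),
      fun e => a.2 e - (if 0 < a.2 e then 1 else 0)), ?_, ?_⟩
  · intro e v hv
    have h1 := ha e v hv
    have h2 := hmV v
    dsimp only
    split_ifs <;> omega
  · intro e v hv
    have h1 := ha e v hv
    have h2 := hmV v
    dsimp only
    split_ifs <;> omega
  · refine Prod.ext (funext fun v => ?_) (funext fun e => ?_)
    · have h2 := hmV v
      simp only [Prod.fst_add, Pi.add_apply]
      split_ifs <;> omega
    · have h2 := hmE e
      simp only [Prod.snd_add, Pi.add_apply]
      split_ifs <;> omega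
  · intro e v hv
    have h1 := ha e v hv
    dsimp only
    split_ifs <;> omega
  · intro e v hv
    have h1 := ha e v hv
    dsimp only
    split_ifs <;> omega
  · refine Prod.ext (funext fun v => ?_) (funext fun e => ?_)
    · simp only [Prod.fst_add, Pi.add_apply]
      split_ifs <;> omega
    · simp only [Prod.snd_add, Pi.add_apply]
      split_ifs <;> omega
end

section
/- Characterization of atoms: Let G = (V,E,r) be a graph and a ∈ A(G). Then a is an atom of A(G) if and only if a is nonzero, a takes only the values 0 and 1 (i.e., a_V v ≤ 1 for all v ∈ V and a_E e ≤ 1 for all e ∈ E), and the support of a is connected, i.e., V_a is nonempty and any two vertices of V_a are joined by a walk using only edges in E_a. Equivalently, the atoms of A(G) are exactly the indicators of non-null connected subgraphs of G. -/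
/-- An atom of the monoid of agglomerations. -/
def IsAtomAgg {V E : Type*} (r : E → Sym2 V) (a : (V → ℕ) × (E → ℕ)) : Prop :=
  IsAgg r a ∧ a ≠ 0 ∧
    ∀ b c : (V → ℕ) × (E → ℕ), IsAgg r b → IsAgg r c → a = b + c → b = 0 ∨ c = 0

/-- `AggJoined r E' x y`: `x` and `y` are joined by a walk using only edges in `E'`. -/
def AggJoined {V E : Type*} (r : E → Sym2 V) (E' : Set E) : V → V → Prop :=
  Relation.ReflTransGen (fun x y => ∃ e ∈ E', r e = s(x, y))

private lemma exists_pair {V : Type*} (z : Sym2 V) : ∃ u w, z = s(u, w) := by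
  induction z using Sym2.ind with
  | _ u w => exact ⟨u, w, rfl⟩

/-- **Characterization of atoms**: the atoms of `A(G)` are exactly the indicators of
non-null connected subgraphs of `G`. -/
theorem isAtomAgg_iff {V E : Type*} [Fintype V] [Fintype E]
    (r : E → Sym2 V) (hr : ∀ e : E, ¬ (r e).IsDiag)
    (a : (V → ℕ) × (E → ℕ)) (ha : IsAgg r a) :
    IsAtomAgg r a ↔
      a ≠ 0 ∧ (∀ v : V, a.1 v ≤ 1) ∧ (∀ e : E, a.2 e ≤ 1) ∧
      {v : V | 0 < a.1 v}.Nonempty ∧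
      ∀ x y : V, 0 < a.1 x → 0 < a.1 y → AggJoined r {e : E | 0 < a.2 e} x y := by
  classical
  have hvert : ∀ b : (V → ℕ) × (E → ℕ), IsAgg r b → b ≠ 0 → ∃ v, 0 < b.1 v := by
    intro b hb hb0
    by_contra h
    push_neg at h
    apply hb0
    have h1 : b.1 = 0 := funext fun v => Nat.le_zero.mp (h v)
    have h2 : b.2 = 0 := funext fun e => by
      obtain ⟨u, w, he⟩ := exists_pair (r e)
      have hu : u ∈ r e := by rw [he]; exact Sym2.mem_mk_left u w
      have h3 := hb e u hu
      have h4 := h u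
      simp only [Pi.zero_apply]
      omega
    exact Prod.ext h1 h2
  constructor
  · rintro ⟨-, ha0, hatom⟩
    obtain ⟨v0, hv0⟩ := hvert a ha ha0
    -- Step 1: a is 0/1-valued
    set b1 : (V → ℕ) × (E → ℕ) :=
      (fun v => if 0 < a.1 v then 1 else 0, fun e => if 0 < a.2 e then 1 else 0) with hb1def
    set c1 : (V → ℕ) × (E → ℕ) :=
      (fun v => a.1 v - (if 0 < a.1 v then 1 else 0),
       fun e => a.2 e - (if 0 < a.2 e then 1 else 0)) with hc1def
    have hb1 : IsAgg r b1 := by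
      intro e v hv
      have := ha e v hv
      simp only [hb1def]
      split_ifs <;> omega
    have hc1 : IsAgg r c1 := by
      intro e v hv
      have := ha e v hv
      simp only [hc1def]
      split_ifs <;> omega
    have habc : a = b1 + c1 := by
      refine Prod.ext (funext fun v => ?_) (funext fun e => ?_) <;>
        · simp only [hb1def, hc1def, Prod.fst_add, Prod.snd_add, Pi.add_apply]
          split_ifs <;> omega
    have hb1ne : b1 ≠ 0 := by
      intro h
      have : b1.1 v0 = 0 := by rw [h]; rfl
      simp only [hb1def, hv0, if_pos] at this
      omega
    have hc10 : c1 = 0 := (hatom b1 c1 hb1 hc1 habc).resolve_left hb1ne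
    have hV1 : ∀ v, a.1 v ≤ 1 := by
      intro v
      have : c1.1 v = 0 := by rw [hc10]; rfl
      simp only [hc1def] at this
      split_ifs at this <;> omega
    have hE1 : ∀ e, a.2 e ≤ 1 := by
      intro e
      have : c1.2 e = 0 := by rw [hc10]; rfl
      simp only [hc1def] at this
      split_ifs at this <;> omega
    refine ⟨ha0, hV1, hE1, ⟨v0, hv0⟩, ?_⟩
    -- Step 2: connectedness of support
    intro x y hx hy
    by_contra hxy
    set S : Set V := {v | AggJoined r {e : E | 0 < a.2 e} x v} with hSdef
    have hyS : y ∉ S := hxy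
    have hxS : x ∈ S := Relation.ReflTransGen.refl
    have hstep : ∀ e, 0 < a.2 e → ∀ v ∈ r e, v ∈ S → ∀ w ∈ r e, w ∈ S := by
      intro e hepos v hv hvS w hw
      obtain ⟨u1, u2, he⟩ := exists_pair (r e)
      rw [he, Sym2.mem_iff] at hv hw
      rcases hv with rfl | rfl <;> rcases hw with rfl | rfl
      · exact hvS
      · exact hvS.tail ⟨e, hepos, he⟩
      · exact hvS.tail ⟨e, hepos, he.trans (Sym2.eq_swap)⟩
      · exact hvS
    set b : (V → ℕ) × (E → ℕ) :=
      (fun v => if v ∈ S then a.1 v else 0,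
       fun e => if ∀ v ∈ r e, v ∈ S then a.2 e else 0) with hbdef
    set c : (V → ℕ) × (E → ℕ) :=
      (fun v => if v ∈ S then 0 else a.1 v,
       fun e => if ∀ v ∈ r e, v ∈ S then 0 else a.2 e) with hcdef
    have hb : IsAgg r b := by
      intro e v hv
      simp only [hbdef]
      split_ifs with h1 h2
      · exact ha e v hv
      · exact absurd (h1 v hv) h2
      · omega
      · omega
    have hc : IsAgg r c := by
      intro e v hv
      by_cases h1 : ∀ v ∈ r e, v ∈ S
      · simp only [hcdef, if_pos h1]
        omega
      · rcases Nat.eq_zero_or_pos (a.2 e) with h0 | hpos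
        · simp only [hcdef, if_neg h1]
          rw [h0]
          exact Nat.zero_le _
        · have hvS : v ∉ S := fun hvS => h1 fun w hw => hstep e hpos v hv hvS w hw
          simp only [hcdef, if_neg h1, if_neg hvS]
          exact ha e v hv
    have habc2 : a = b + c := by
      refine Prod.ext (funext fun v => ?_) (funext fun e => ?_) <;>
        · simp only [hbdef, hcdef, Prod.fst_add, Prod.snd_add, Pi.add_apply]
          split_ifs <;> omega
    have hbne : b ≠ 0 := by
      intro h
      have : b.1 x = 0 := by rw [h]; rfl
      simp only [hbdef, if_pos hxS] at this
      omega
    have hcne : c ≠ 0 := by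
      intro h
      have : c.1 y = 0 := by rw [h]; rfl
      simp only [hcdef, if_neg hyS] at this
      omega
    rcases hatom b c hb hc habc2 with h | h
    · exact hbne h
    · exact hcne h
  · rintro ⟨ha0, hV1, hE1, -, hconn⟩
    refine ⟨ha, ha0, ?_⟩
    intro b c hb hc habc
    by_contra h
    push_neg at h
    obtain ⟨hbne, hcne⟩ := h
    obtain ⟨x, hx⟩ := hvert b hb hbne
    obtain ⟨y, hy⟩ := hvert c hc hcne
    have haV : ∀ v, a.1 v = b.1 v + c.1 v := fun v => by rw [habc]; rfl
    have haE : ∀ e, a.2 e = b.2 e + c.2 e := fun e => by rw [habc]; rfl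
    have hjoin : AggJoined r {e : E | 0 < a.2 e} x y :=
      hconn x y (by have := haV x; omega) (by have := haV y; omega)
    have key : ∀ z, AggJoined r {e : E | 0 < a.2 e} x z → 0 < b.1 z := by
      intro z hz
      induction hz with
      | refl => exact hx
      | @tail m w h1 h2 ih =>
        obtain ⟨e, he, hre⟩ := h2
        have hme : m ∈ r e := by rw [hre]; exact Sym2.mem_mk_left m w
        have hwe : w ∈ r e := by rw [hre]; exact Sym2.mem_mk_right m w
        have h3 := hc e m hme
        have h4 := hb e w hwe
        have h5 := haV m
        have h6 := haE e
        have h7 := hV1 m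
        have h8 : 0 < a.2 e := he
        omega
    have := key y hjoin
    have := haV y
    have := hV1 y
    omega
end

section
/- Divisor theory for A(G): Let G = (V,E,r) be a graph. Let I = {(e,v) ∈ E × V : e ∼ v} (so |I| = 2|E|) and let V₀ = {v ∈ V : no edge is incident with v} be the set of isolated vertices. Define φ : A(G) → (E → ℕ) × (I → ℕ) × (V₀ → ℕ) by φ(a) = (e ↦ a_E e, (e,v) ↦ a_V v − a_E e, v ↦ a_V v). Then: (i) φ is an injective additive monoid homomorphism; (ii) the image of φ is exactly the set of triples (f, g, h) satisfying g(e,v) + f(e) = g(e',v) + f(e') whenever e and e' are both incident with v; (iii) φ is a divisor homomorphism: if φ(a) ≤ φ(b) pointwise, then b = a + c for some c ∈ A(G); and (iv) for every standard basis vector δ of (E → ℕ) × (I → ℕ) × (V₀ → ℕ), there exist a, b ∈ A(G) with δ equal to the pointwise minimum of φ(a) and φ(b). (Hence A(G) is a finitely generated reduced Krull monoid whose divisor theory has 3|E| + |V₀| prime divisors.) -/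
/-!
Away from isolated vertices, `a_V v` is recovered from `φ a = aggMap r a` as
`(a_V v − a_E e) + a_E e` for any edge `e ∼ v`, and these sums are exactly what the compatibility
equations of (ii) make independent of `e`; this gives injectivity, the image and, applied to
`a ≤ b`, the divisor property with `c = b − a`. The basis vectors of the free monoid are cut out
as minima of `φ` of 0/1-valued agglomerations.
-/

section

variable {V E : Type*} {r : E → Sym2 V}

abbrev Incidence (r : E → Sym2 V) := {p : E × V // p.2 ∈ r p.1}

abbrev IsolatedVertex (r : E → Sym2 V) := {v : V // ∀ e : E, v ∉ r e}

variable (r) in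
def aggMap (a : (V → ℕ) × (E → ℕ)) :
    (E → ℕ) × (Incidence r → ℕ) × (IsolatedVertex r → ℕ) :=
  (a.2, fun p => a.1 p.1.2 - a.2 p.1.1, fun v => a.1 v.1)

theorem aggMap_add {a b : (V → ℕ) × (E → ℕ)} (ha : IsAgg r a) (hb : IsAgg r b) :
    aggMap r (a + b) = aggMap r a + aggMap r b := by
  refine Prod.ext rfl (Prod.ext (funext fun ⟨⟨e, v⟩, he⟩ => ?_) rfl)
  exact (tsub_add_tsub_comm (ha e v he) (hb e v he)).symm

theorem IsAgg.aggMap_incidence_add_edge {a : (V → ℕ) × (E → ℕ)} (ha : IsAgg r a) {e : E} {v : V}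
    (he : v ∈ r e) : (aggMap r a).2.1 ⟨(e, v), he⟩ + (aggMap r a).1 e = a.1 v :=
  Nat.sub_add_cancel (ha e v he)

theorem le_of_aggMap_le {a b : (V → ℕ) × (E → ℕ)} (ha : IsAgg r a) (hb : IsAgg r b)
    (h : aggMap r a ≤ aggMap r b) : a ≤ b := by
  obtain ⟨hE, hI, hV⟩ := h
  refine ⟨fun v => ?_, hE⟩
  by_cases hv : ∃ e, v ∈ r e
  · obtain ⟨e, he⟩ := hv
    rw [← ha.aggMap_incidence_add_edge he, ← hb.aggMap_incidence_add_edge he]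
    exact add_le_add (hI _) (hE e)
  · exact hV ⟨v, fun e he => hv ⟨e, he⟩⟩

theorem aggMap_injOn : Set.InjOn (aggMap r) {a | IsAgg r a} := fun _ ha _ hb h =>
  le_antisymm (le_of_aggMap_le ha hb h.le) (le_of_aggMap_le hb ha h.ge)

theorem IsAgg.tsub_of_aggMap_le {a b : (V → ℕ) × (E → ℕ)} (ha : IsAgg r a) (hb : IsAgg r b)
    (h : aggMap r a ≤ aggMap r b) : IsAgg r (b - a) := by
  intro e v he
  have hI := h.2.1 ⟨(e, v), he⟩
  have hE := h.1 e
  have ha' := ha e v he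
  have hb' := hb e v he
  simp only [aggMap] at hI hE
  simp only [Prod.fst_sub, Prod.snd_sub, Pi.sub_apply]
  omega

theorem exists_add_of_aggMap_le {a b : (V → ℕ) × (E → ℕ)} (ha : IsAgg r a) (hb : IsAgg r b)
    (h : aggMap r a ≤ aggMap r b) : ∃ c, IsAgg r c ∧ b = a + c :=
  ⟨b - a, ha.tsub_of_aggMap_le hb h, (add_tsub_cancel_of_le (le_of_aggMap_le ha hb h)).symm⟩

def IsCompatible (f : E → ℕ) (g : Incidence r → ℕ) : Prop :=
  ∀ (e e' : E) (v : V) (he : v ∈ r e) (he' : v ∈ r e'),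
    g ⟨(e, v), he⟩ + f e = g ⟨(e', v), he'⟩ + f e'

theorem IsAgg.isCompatible_aggMap {a : (V → ℕ) × (E → ℕ)} (ha : IsAgg r a) :
    IsCompatible (aggMap r a).1 (aggMap r a).2.1 := by
  intro e e' v he he'
  rw [ha.aggMap_incidence_add_edge, ha.aggMap_incidence_add_edge]

open Classical in
noncomputable def aggOfImage (f : E → ℕ) (g : Incidence r → ℕ) (h : IsolatedVertex r → ℕ) :
    (V → ℕ) × (E → ℕ) :=
  (fun v => if hv : ∃ e, v ∈ r e then g ⟨(hv.choose, v), hv.choose_spec⟩ + f hv.choose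
    else h ⟨v, fun e he => hv ⟨e, he⟩⟩, f)

theorem aggOfImage_fst_of_mem {f : E → ℕ} {g : Incidence r → ℕ} (h : IsolatedVertex r → ℕ)
    (hfg : IsCompatible f g) {e : E} {v : V} (he : v ∈ r e) :
    (aggOfImage f g h).1 v = g ⟨(e, v), he⟩ + f e := by
  have hv : ∃ e, v ∈ r e := ⟨e, he⟩
  simp only [aggOfImage, dif_pos hv]
  exact hfg _ _ _ _ _

theorem isAgg_aggOfImage {f : E → ℕ} {g : Incidence r → ℕ} (h : IsolatedVertex r → ℕ)
    (hfg : IsCompatible f g) : IsAgg r (aggOfImage f g h) := by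
  intro e v he
  rw [aggOfImage_fst_of_mem h hfg he]
  exact Nat.le_add_left _ _

theorem aggMap_aggOfImage {f : E → ℕ} {g : Incidence r → ℕ} (h : IsolatedVertex r → ℕ)
    (hfg : IsCompatible f g) : aggMap r (aggOfImage f g h) = (f, g, h) := by
  refine Prod.ext rfl (Prod.ext (funext fun ⟨⟨e, v⟩, he⟩ => ?_) (funext fun ⟨v, hv⟩ => ?_))
  · simp only [aggMap, aggOfImage_fst_of_mem h hfg he]
    exact Nat.add_sub_cancel _ _
  · simp [aggMap, aggOfImage, hv]

theorem exists_aggMap_eq_iff (f : E → ℕ) (g : Incidence r → ℕ) (h : IsolatedVertex r → ℕ) :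
    (∃ a, IsAgg r a ∧ aggMap r a = (f, g, h)) ↔ IsCompatible f g := by
  constructor
  · rintro ⟨a, ha, hfgh⟩
    simpa [hfgh] using ha.isCompatible_aggMap
  · intro hfg
    exact ⟨_, isAgg_aggOfImage h hfg, aggMap_aggOfImage h hfg⟩

theorem exists_inf_eq_single_edge [DecidableEq E] (e₀ : E) :
    ∃ a b, IsAgg r a ∧ IsAgg r b ∧
      ((Pi.single e₀ 1, 0, 0) : (E → ℕ) × (Incidence r → ℕ) × (IsolatedVertex r → ℕ)) =
        aggMap r a ⊓ aggMap r b := by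
  classical
  -- `φ 1 = (1, 0, 1)` kills everything of `φ a` except its value at `e₀`.
  refine ⟨(fun v => if v ∈ r e₀ then 1 else 0, Pi.single e₀ 1), 1, ?_, fun _ _ _ => le_rfl, ?_⟩
  · intro e v he
    by_cases h : e = e₀
    · subst h; simp [he]
    · simp [h]
  · refine Prod.ext (funext fun e => ?_) (Prod.ext (funext fun p => ?_) (funext fun ⟨v, hv⟩ => ?_))
    · by_cases h : e = e₀ <;> simp [aggMap, h]
    · simp [aggMap]
    · simp [aggMap, hv]

theorem exists_inf_eq_single_incidence [DecidableEq V] [DecidableEq E] (p₀ : Incidence r) :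
    ∃ a b, IsAgg r a ∧ IsAgg r b ∧
      ((0, Pi.single p₀ 1, 0) : (E → ℕ) × (Incidence r → ℕ) × (IsolatedVertex r → ℕ)) =
        aggMap r a ⊓ aggMap r b := by
  obtain ⟨⟨e₀, v₀⟩, h₀⟩ := p₀
  -- The incidence part of `φ a` is the indicator of `v = v₀`, that of `φ b` the one of `e = e₀`.
  refine ⟨(Pi.single v₀ 1, 0), (1, 1 - Pi.single e₀ 1), fun _ _ _ => Nat.zero_le _, ?_, ?_⟩
  · intro e v _
    simp only [Pi.one_apply, Pi.sub_apply]
    exact Nat.sub_le _ _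
  · refine Prod.ext (funext fun e => ?_) (Prod.ext (funext fun ⟨⟨e, v⟩, he⟩ => ?_)
      (funext fun ⟨v, hv⟩ => ?_))
    · simp [aggMap]
    · by_cases hv : v = v₀ <;> by_cases he : e = e₀ <;> simp [aggMap, Pi.single_apply, hv, he]
    · have : v ≠ v₀ := fun h => hv e₀ (h ▸ h₀)
      simp [aggMap, this]

theorem exists_inf_eq_single_isolated [DecidableEq V] (v₀ : IsolatedVertex r) :
    ∃ a b, IsAgg r a ∧ IsAgg r b ∧
      ((0, 0, Pi.single v₀ 1) : (E → ℕ) × (Incidence r → ℕ) × (IsolatedVertex r → ℕ)) =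
        aggMap r a ⊓ aggMap r b := by
  have hagg : IsAgg r (Pi.single v₀.1 1, 0) := fun _ _ _ => Nat.zero_le _
  refine ⟨_, _, hagg, hagg, ?_⟩
  rw [inf_idem]
  refine Prod.ext rfl (Prod.ext (funext fun ⟨⟨e, v⟩, he⟩ => ?_) (funext fun ⟨v, hv⟩ => ?_))
  · have : v ≠ v₀.1 := fun h => v₀.2 e (h ▸ he)
    simp [aggMap, this]
  · simp [aggMap, Pi.single_apply, Subtype.ext_iff]

end

theorem divisor_theory_general {V E : Type*}
    [DecidableEq V] [DecidableEq E]
    (r : E → Sym2 V)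
    (φ : ((V → ℕ) × (E → ℕ)) →
      (E → ℕ) × ({p : E × V // p.2 ∈ r p.1} → ℕ) × ({v : V // ∀ e : E, v ∉ r e} → ℕ))
    (hφ : ∀ a : (V → ℕ) × (E → ℕ),
      φ a = (fun e => a.2 e, fun p => a.1 p.1.2 - a.2 p.1.1, fun v => a.1 v.1)) :
    -- (i) additive and injective on agglomerations
    (∀ a b : (V → ℕ) × (E → ℕ), IsAgg r a → IsAgg r b → φ (a + b) = φ a + φ b) ∧
    (∀ a b : (V → ℕ) × (E → ℕ), IsAgg r a → IsAgg r b → φ a = φ b → a = b) ∧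
    -- (ii) description of the image
    (∀ (f : E → ℕ) (g : {p : E × V // p.2 ∈ r p.1} → ℕ) (h : {v : V // ∀ e : E, v ∉ r e} → ℕ),
      (∃ a : (V → ℕ) × (E → ℕ), IsAgg r a ∧ φ a = (f, g, h)) ↔
        ∀ (e e' : E) (v : V) (he : v ∈ r e) (he' : v ∈ r e'),
          g ⟨(e, v), he⟩ + f e = g ⟨(e', v), he'⟩ + f e') ∧
    -- (iii) divisor homomorphism
    (∀ a b : (V → ℕ) × (E → ℕ), IsAgg r a → IsAgg r b → φ a ≤ φ b →
      ∃ c : (V → ℕ) × (E → ℕ), IsAgg r c ∧ b = a + c) ∧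
    -- (iv) standard basis vectors are minima of pairs from the image
    (∀ δ : (E → ℕ) × ({p : E × V // p.2 ∈ r p.1} → ℕ) × ({v : V // ∀ e : E, v ∉ r e} → ℕ),
      ((∃ e₀ : E, δ = (Pi.single e₀ 1, 0, 0)) ∨
       (∃ p₀ : {p : E × V // p.2 ∈ r p.1}, δ = (0, Pi.single p₀ 1, 0)) ∨
       (∃ v₀ : {v : V // ∀ e : E, v ∉ r e}, δ = (0, 0, Pi.single v₀ 1))) →
      ∃ a b : (V → ℕ) × (E → ℕ), IsAgg r a ∧ IsAgg r b ∧ δ = φ a ⊓ φ b) := by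
  obtain rfl : φ = aggMap r := funext hφ
  refine ⟨fun _ _ => aggMap_add, fun _ _ ha hb => aggMap_injOn ha hb, exists_aggMap_eq_iff,
    fun _ _ => exists_add_of_aggMap_le, ?_⟩
  rintro δ (⟨e₀, rfl⟩ | ⟨p₀, rfl⟩ | ⟨v₀, rfl⟩)
  exacts [exists_inf_eq_single_edge e₀, exists_inf_eq_single_incidence p₀,
    exists_inf_eq_single_isolated v₀]

/-- **Divisor theory for `A(G)`**: the map
`φ(a) = (e ↦ a_E e, (e,v) ↦ a_V v − a_E e, v₀ ↦ a_V v₀)` (the last component running over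
isolated vertices) is an injective additive divisor homomorphism into a free monoid,
its image is cut out by the stated linear equations, and every standard basis vector is a
pointwise minimum of two elements of the image.  Hence `A(G)` is a finitely generated
reduced Krull monoid whose divisor theory has `3|E| + |V₀|` prime divisors. -/
theorem divisor_theory {V E : Type*} [Fintype V] [Fintype E]
    [DecidableEq V] [DecidableEq E]
    (r : E → Sym2 V) (hr : ∀ e : E, ¬ (r e).IsDiag)
    (φ : ((V → ℕ) × (E → ℕ)) →
      (E → ℕ) × ({p : E × V // p.2 ∈ r p.1} → ℕ) × ({v : V // ∀ e : E, v ∉ r e} → ℕ))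
    (hφ : ∀ a : (V → ℕ) × (E → ℕ),
      φ a = (fun e => a.2 e, fun p => a.1 p.1.2 - a.2 p.1.1, fun v => a.1 v.1)) :
    -- (i) additive and injective on agglomerations
    (∀ a b : (V → ℕ) × (E → ℕ), IsAgg r a → IsAgg r b → φ (a + b) = φ a + φ b) ∧
    (∀ a b : (V → ℕ) × (E → ℕ), IsAgg r a → IsAgg r b → φ a = φ b → a = b) ∧
    -- (ii) description of the image
    (∀ (f : E → ℕ) (g : {p : E × V // p.2 ∈ r p.1} → ℕ) (h : {v : V // ∀ e : E, v ∉ r e} → ℕ),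
      (∃ a : (V → ℕ) × (E → ℕ), IsAgg r a ∧ φ a = (f, g, h)) ↔
        ∀ (e e' : E) (v : V) (he : v ∈ r e) (he' : v ∈ r e'),
          g ⟨(e, v), he⟩ + f e = g ⟨(e', v), he'⟩ + f e') ∧
    -- (iii) divisor homomorphism
    (∀ a b : (V → ℕ) × (E → ℕ), IsAgg r a → IsAgg r b → φ a ≤ φ b →
      ∃ c : (V → ℕ) × (E → ℕ), IsAgg r c ∧ b = a + c) ∧
    -- (iv) standard basis vectors are minima of pairs from the image
    (∀ δ : (E → ℕ) × ({p : E × V // p.2 ∈ r p.1} → ℕ) × ({v : V // ∀ e : E, v ∉ r e} → ℕ),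
      ((∃ e₀ : E, δ = (Pi.single e₀ 1, 0, 0)) ∨
       (∃ p₀ : {p : E × V // p.2 ∈ r p.1}, δ = (0, Pi.single p₀ 1, 0)) ∨
       (∃ v₀ : {v : V // ∀ e : E, v ∉ r e}, δ = (0, 0, Pi.single v₀ 1))) →
      ∃ a b : (V → ℕ) × (E → ℕ), IsAgg r a ∧ IsAgg r b ∧ δ = φ a ⊓ φ b) :=
  divisor_theory_general r φ hφ
end

section
/- Divisor class group of A(G): Let G = (V,E,r) be a graph, let I = {(e,v) ∈ E × V : e ∼ v}, let V₀ ⊆ V be the set of isolated vertices, and let φ : A(G) → (E → ℕ) × (I → ℕ) × (V₀ → ℕ) be defined by φ(a) = (e ↦ a_E e, (e,v) ↦ a_V v − a_E e, v ↦ a_V v). Let L be the subgroup of the free abelian group ℤ^E × ℤ^I × ℤ^{V₀} generated by the image φ(A(G)). Then the quotient group (ℤ^E × ℤ^I × ℤ^{V₀}) / L is a free abelian group of rank 2|E| − |V| + |V₀|. -/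
section Aux

variable {V E : Type*}

/-- A chosen edge at a non-isolated vertex. -/
noncomputable def pickE (r : E → Sym2 V) (v : V) (h : ∃ e, v ∈ r e) : E := h.choose

lemma pickE_mem (r : E → Sym2 V) (v : V) (h : ∃ e, v ∈ r e) : v ∈ r (pickE r v h) :=
  h.choose_spec

/-- Predicate singling out incidences that are not the chosen one at their vertex. -/
def Jpred (r : E → Sym2 V) (i : {p : E × V // p.2 ∈ r p.1}) : Prop :=
  i.1.1 ≠ pickE r i.1.2 ⟨i.1.1, i.2⟩

/-- The chosen incidence at the vertex of an incidence. -/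
noncomputable def pickI (r : E → Sym2 V) (i : {p : E × V // p.2 ∈ r p.1}) :
    {p : E × V // p.2 ∈ r p.1} :=
  ⟨(pickE r i.1.2 ⟨i.1.1, i.2⟩, i.1.2), pickE_mem r i.1.2 ⟨i.1.1, i.2⟩⟩

/-- The comparison homomorphism. -/
noncomputable def psi (r : E → Sym2 V) :
    ((E → ℤ) × ({p : E × V // p.2 ∈ r p.1} → ℤ) × ({v : V // ∀ e : E, v ∉ r e} → ℤ)) →+
      ({i : {p : E × V // p.2 ∈ r p.1} // Jpred r i} → ℤ) where
  toFun t := fun j =>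
    (t.2.1 j.1 + t.1 j.1.1.1) - (t.2.1 (pickI r j.1) + t.1 (pickI r j.1).1.1)
  map_zero' := by ext j; simp
  map_add' a b := by
    ext j
    simp only [Prod.fst_add, Prod.snd_add, Pi.add_apply]
    ring

end Aux

/-- **Divisor class group of `A(G)`**: with `φ` the divisor theory of `A(G)` (taking values
in `ℤ^E × ℤ^I × ℤ^{V₀}`, where `I` is the set of incidences and `V₀` the set of isolated
vertices) and `L` the subgroup generated by the image of the agglomerations, the quotient
is free abelian of rank `2|E| − |V| + |V₀|`. -/
theorem class_group_free {V E : Type*} [Fintype V] [Fintype E]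
    (r : E → Sym2 V) (hr : ∀ e : E, ¬ (r e).IsDiag)
    (φ : ((V → ℕ) × (E → ℕ)) →
      (E → ℤ) × ({p : E × V // p.2 ∈ r p.1} → ℤ) × ({v : V // ∀ e : E, v ∉ r e} → ℤ))
    (hφ : ∀ a : (V → ℕ) × (E → ℕ),
      φ a = (fun e => (a.2 e : ℤ), fun p => (a.1 p.1.2 : ℤ) - (a.2 p.1.1 : ℤ),
             fun v => (a.1 v.1 : ℤ)))
    (L : AddSubgroup
      ((E → ℤ) × ({p : E × V // p.2 ∈ r p.1} → ℤ) × ({v : V // ∀ e : E, v ∉ r e} → ℤ)))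
    (hL : L = AddSubgroup.closure (φ '' {a : (V → ℕ) × (E → ℕ) | IsAgg r a})) :
    Nonempty
      ((((E → ℤ) × ({p : E × V // p.2 ∈ r p.1} → ℤ) × ({v : V // ∀ e : E, v ∉ r e} → ℤ)) ⧸ L)
        ≃+ (Fin (2 * Fintype.card E + Nat.card {v : V // ∀ e : E, v ∉ r e}
              - Fintype.card V) → ℤ)) := by
  classical
  -- surjectivity of `psi r`
  have hsurj : Function.Surjective (psi r) := by
    intro w
    refine ⟨(0, fun i => if h : Jpred r i then w ⟨i, h⟩ else 0, 0), ?_⟩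
    funext j
    have h1 : ¬ Jpred r (pickI r j.1) := fun h => h rfl
    simp [psi, dif_neg h1, dif_pos j.2]
  -- kernel of `psi r` is `L`
  have hker : (psi r).ker = L := by
    apply le_antisymm
    · -- ker ≤ L
      intro t ht
      rw [AddMonoidHom.mem_ker] at ht
      -- coefficient function
      set C : V → ℤ := fun v =>
        if h : ∃ e, v ∈ r e then
          t.2.1 ⟨(pickE r v h, v), pickE_mem r v h⟩ + t.1 (pickE r v h)
        else t.2.2 ⟨v, fun e he => h ⟨e, he⟩⟩ with hC
      have key : ∀ i : {p : E × V // p.2 ∈ r p.1}, t.2.1 i + t.1 i.1.1 = C i.1.2 := by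
        intro i
        have hex : ∃ e, i.1.2 ∈ r e := ⟨i.1.1, i.2⟩
        have hCval : C i.1.2 = t.2.1 (pickI r i) + t.1 (pickI r i).1.1 := by
          rw [hC]; exact dif_pos hex
        by_cases hj : Jpred r i
        · have h0 := congrFun ht ⟨i, hj⟩
          simp only [psi, AddMonoidHom.coe_mk, ZeroHom.coe_mk, Pi.zero_apply] at h0
          rw [hCval]; linarith [h0]
        · have : i = pickI r i := by
            apply Subtype.ext
            apply Prod.ext
            · exact not_not.mp hj
            · rfl
          rw [hCval, ← this]
      -- the generators
      set A : E → (V → ℕ) × (E → ℕ) := fun e =>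
        (fun v => if v ∈ r e then 1 else 0, fun f => if f = e then 1 else 0) with hA
      set B : V → (V → ℕ) × (E → ℕ) := fun v =>
        (fun w => if w = v then 1 else 0, fun _ => 0) with hB
      have hAagg : ∀ e, IsAgg r (A e) := by
        intro e f v hv
        simp only [hA]
        split
        · next h => subst h; simp [hv]
        · exact Nat.zero_le _
      have hBagg : ∀ v, IsAgg r (B v) := fun v e w _ => Nat.zero_le _
      have hAL : ∀ e, φ (A e) ∈ L := fun e =>
        hL ▸ AddSubgroup.subset_closure ⟨A e, hAagg e, rfl⟩
      have hBL : ∀ v, φ (B v) ∈ L := fun v =>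
        hL ▸ AddSubgroup.subset_closure ⟨B v, hBagg v, rfl⟩
      have decomp : t = (∑ e : E, t.1 e • φ (A e)) +
          ∑ v : V, (C v - ∑ e : E, (if v ∈ r e then t.1 e else 0)) • φ (B v) := by
        have h1 : ∀ e, φ (A e) =
            (fun f => ((if f = e then 1 else 0 : ℕ) : ℤ),
             fun p => ((if p.1.2 ∈ r e then 1 else 0 : ℕ) : ℤ) -
               ((if p.1.1 = e then 1 else 0 : ℕ) : ℤ),
             fun v => ((if v.1 ∈ r e then 1 else 0 : ℕ) : ℤ)) := fun e => hφ (A e)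
        have h2 : ∀ v, φ (B v) =
            (fun _ => ((0 : ℕ) : ℤ),
             fun p => ((if p.1.2 = v then 1 else 0 : ℕ) : ℤ) - ((0 : ℕ) : ℤ),
             fun w => ((if w.1 = v then 1 else 0 : ℕ) : ℤ)) := fun v => hφ (B v)
        refine Prod.ext ?_ (Prod.ext ?_ ?_)
        · funext f
          simp only [Prod.fst_add, Prod.fst_sum, Prod.smul_fst, h1, h2,
            Finset.sum_apply, Pi.add_apply, Pi.smul_apply, smul_eq_mul]
          push_cast
          simp [mul_ite]
        · funext i
          simp only [Prod.snd_add, Prod.snd_sum, Prod.smul_snd, Prod.fst_add,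
            Prod.fst_sum, Prod.smul_fst, h1, h2,
            Finset.sum_apply, Pi.add_apply, Pi.smul_apply, smul_eq_mul]
          push_cast
          have hk := key i
          simp only [mul_sub, mul_ite, mul_one, mul_zero, sub_zero,
            Finset.sum_sub_distrib]
          rw [Finset.sum_ite_eq Finset.univ i.1.1 (fun e => t.1 e),
            Finset.sum_ite_eq Finset.univ i.1.2 (fun v => C v - _)]
          simp only [Finset.mem_univ, if_true]
          have : (∑ e : E, if i.1.2 ∈ r e then t.1 e else 0) =
              ∑ e : E, if i.1.2 ∈ r e then t.1 e else 0 := rfl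
          linarith [hk]
        · funext v
          simp only [Prod.snd_add, Prod.snd_sum, Prod.smul_snd, h1, h2,
            Finset.sum_apply, Pi.add_apply, Pi.smul_apply, smul_eq_mul]
          push_cast
          have hv := v.2
          simp only [hv, if_false, mul_zero, Finset.sum_const_zero, zero_add,
            mul_ite, mul_one]
          rw [Finset.sum_ite_eq Finset.univ v.1 (fun w => C w - _)]
          simp only [Finset.mem_univ, if_true]
          have hCv : C v.1 = t.2.2 v := by
            have hne : ¬ ∃ e, (v : V) ∈ r e := not_exists.mpr hv
            simp only [hC]
            rw [dif_neg hne]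
          rw [hCv]
          simp [hv]
      rw [decomp]
      refine AddSubgroup.add_mem L ?_ ?_
      · exact AddSubgroup.sum_mem L fun e _ => AddSubgroup.zsmul_mem L (hAL e) _
      · exact AddSubgroup.sum_mem L fun v _ => AddSubgroup.zsmul_mem L (hBL v) _
    · -- L ≤ ker
      rw [hL, AddSubgroup.closure_le]
      rintro _ ⟨a, -, rfl⟩
      simp only [SetLike.mem_coe, AddMonoidHom.mem_ker]
      funext j
      rw [hφ]
      have hv2 : (pickI r j.1).1.2 = j.1.1.2 := rfl
      simp only [psi, AddMonoidHom.coe_mk, ZeroHom.coe_mk, Pi.zero_apply, hv2]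
      ring
  -- cardinality computation
  have cardMem : ∀ e : E, Fintype.card {v : V // v ∈ r e} = 2 := by
    suffices H : ∀ s : Sym2 V, ¬ s.IsDiag → Fintype.card {v : V // v ∈ s} = 2 from
      fun e => H (r e) (hr e)
    intro s
    induction s using Sym2.ind with
    | _ a b =>
      intro h
      have hab : a ≠ b := fun hh => h (Sym2.mk_isDiag_iff.mpr hh)
      rw [Fintype.card_subtype]
      have : Finset.filter (fun x => x ∈ s(a, b)) Finset.univ = {a, b} := by
        ext x
        simp [Sym2.mem_iff]
      rw [this, Finset.card_pair hab]
  have cardI : Fintype.card {p : E × V // p.2 ∈ r p.1} = 2 * Fintype.card E := by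
    have eS : {p : E × V // p.2 ∈ r p.1} ≃ Σ e : E, {v : V // v ∈ r e} :=
      { toFun := fun p => ⟨p.1.1, p.1.2, p.2⟩
        invFun := fun q => ⟨(q.1, q.2.1), q.2.2⟩
        left_inv := fun p => rfl
        right_inv := fun q => rfl }
    rw [Fintype.card_congr eS, Fintype.card_sigma]
    simp [cardMem, mul_comm]
  have eCompl : {i : {p : E × V // p.2 ∈ r p.1} // ¬ Jpred r i} ≃ {v : V // ∃ e, v ∈ r e} :=
    { toFun := fun i => ⟨i.1.1.2, ⟨i.1.1.1, i.1.2⟩⟩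
      invFun := fun v => ⟨⟨(pickE r v.1 v.2, v.1), pickE_mem r v.1 v.2⟩,
        not_not.mpr rfl⟩
      left_inv := by
        rintro ⟨i, hi⟩
        apply Subtype.ext
        apply Subtype.ext
        apply Prod.ext
        · exact (not_not.mp hi).symm
        · rfl
      right_inv := fun v => rfl }
  have hV1le : Fintype.card {v : V // ∃ e, v ∈ r e} ≤
      Fintype.card {p : E × V // p.2 ∈ r p.1} := by
    refine Fintype.card_le_of_injective
      (fun v => ⟨(pickE r v.1 v.2, v.1), pickE_mem r v.1 v.2⟩) ?_
    intro v w hvw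
    apply Subtype.ext
    exact congrArg (fun i : {p : E × V // p.2 ∈ r p.1} => i.1.2) hvw
  have hV0 : Fintype.card {v : V // ∀ e : E, v ∉ r e} =
      Fintype.card V - Fintype.card {v : V // ∃ e, v ∈ r e} := by
    have e0 : {v : V // ∀ e : E, v ∉ r e} ≃ {v : V // ¬ ∃ e, v ∈ r e} :=
      Equiv.subtypeEquivRight (fun v => by push_neg; rfl)
    rw [Fintype.card_congr e0, Fintype.card_subtype_compl]
  have hV1leV : Fintype.card {v : V // ∃ e, v ∈ r e} ≤ Fintype.card V :=
    Fintype.card_subtype_le _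
  have hcomplJ : Fintype.card {i : {p : E × V // p.2 ∈ r p.1} // ¬ Jpred r i} =
      Fintype.card {v : V // ∃ e, v ∈ r e} := Fintype.card_congr eCompl
  have hJcompl : Fintype.card {i : {p : E × V // p.2 ∈ r p.1} // ¬ Jpred r i} =
      Fintype.card {p : E × V // p.2 ∈ r p.1} -
        Fintype.card {i : {p : E × V // p.2 ∈ r p.1} // Jpred r i} :=
    Fintype.card_subtype_compl _
  have hJle : Fintype.card {i : {p : E × V // p.2 ∈ r p.1} // Jpred r i} ≤
      Fintype.card {p : E × V // p.2 ∈ r p.1} := Fintype.card_subtype_le _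
  have hcard : Fintype.card {i : {p : E × V // p.2 ∈ r p.1} // Jpred r i} =
      2 * Fintype.card E + Nat.card {v : V // ∀ e : E, v ∉ r e} - Fintype.card V := by
    rw [Nat.card_eq_fintype_card, hV0]
    omega
  -- assemble
  have equiv1 := QuotientAddGroup.quotientKerEquivOfSurjective (psi r) hsurj
  exact ⟨((QuotientAddGroup.quotientAddEquivOfEq hker.symm).trans equiv1).trans
    (AddEquiv.arrowCongr (Fintype.equivFinOfCardEq hcard) (AddEquiv.refl ℤ))⟩
end

section
/- Davenport constant of A(G): Let G = (V,E,r) be a connected graph with at least two vertices (so E is nonempty). For a ∈ A(G) define ℓ(a) = Σ_{v ∈ V} deg(v)·a_V(v) − Σ_{e ∈ E} a_E(e). Then the maximum of ℓ(a) over all atoms a of A(G) equals 2|E| − |V| + 1; that is, ℓ(a) ≤ 2|E| − |V| + 1 for every atom a, and there exists an atom attaining this value. -/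
/-!
Write `ℓ(a) = Σ_e (Σ_{v ∈ e} a_V v - a_E e)`. An atom `a` is `0/1`-valued, and its support is
connected through the edges carrying `a_E = 1` (otherwise restricting `a` to one component of
that support splits it). Hence the edges `F` with `a_E e = 1` or with an endpoint outside the
support connect `G`, so `|F| ≥ |V| - 1`; every edge contributes at most `2` to `ℓ(a)`, and edges
of `F` at most `1`, giving `ℓ(a) ≤ 2|E| - |V| + 1`. Equality holds for `a_V = 1` and `a_E` the
indicator of a spanning tree, which is an atom because a summand's vertex part is constant along
the tree.
-/

section

variable {V E : Type*}

section Connectivity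

variable {r : E → Sym2 V} {F : Set E}

def edgeGraph (r : E → Sym2 V) (F : Set E) : SimpleGraph V :=
  SimpleGraph.fromEdgeSet (r '' F)

theorem reachable_edgeGraph_iff {x y : V} :
    (edgeGraph r F).Reachable x y ↔ AggJoined r F x y := by
  rw [SimpleGraph.reachable_iff_reflTransGen]
  constructor
  · refine fun h => Relation.ReflTransGen.mono (fun x y hxy => ?_) _ _ h
    obtain ⟨⟨e, he, hre⟩, -⟩ := hxy
    exact ⟨e, he, hre⟩
  · intro h
    induction h with
    | refl => rfl
    | @tail y z _ hyz ih =>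
      obtain ⟨e, he, hre⟩ := hyz
      by_cases hne : y = z
      · exact hne ▸ ih
      · exact ih.tail ⟨⟨e, he, hre⟩, hne⟩

theorem AggJoined.mono {F' : Set E} (hFF' : F ⊆ F') {x y : V} (h : AggJoined r F x y) :
    AggJoined r F' x y :=
  Relation.ReflTransGen.mono (fun _ _ ⟨e, he, hre⟩ => ⟨e, hFF' he, hre⟩) _ _ h

theorem connected_edgeGraph [Nonempty V] (hF : ∀ x y, AggJoined r F x y) :
    (edgeGraph r F).Connected :=
  ⟨fun x y => reachable_edgeGraph_iff.mpr (hF x y)⟩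

theorem AggJoined.eq_of_forall_edge {β : Type*} {f : V → β}
    (hf : ∀ e ∈ F, ∀ x ∈ r e, ∀ y ∈ r e, f x = f y) {x y : V} (h : AggJoined r F x y) :
    f x = f y := by
  induction h with
  | refl => rfl
  | tail _ hyz ih =>
    obtain ⟨e, he, hre⟩ := hyz
    exact ih.trans (hf e he _ (hre ▸ Sym2.mem_mk_left _ _) _ (hre ▸ Sym2.mem_mk_right _ _))

theorem aggJoined_of_forall_not_mem {P : V → Prop}
    (hP : ∀ x y, P x → P y → AggJoined r F x y) (hPF : ∀ e ∉ F, ∀ v ∈ r e, P v) {x y : V}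
    (h : AggJoined r Set.univ x y) : AggJoined r F x y := by
  induction h with
  | refl => exact Relation.ReflTransGen.refl
  | @tail y z _ hyz ih =>
    obtain ⟨e, -, hre⟩ := hyz
    by_cases he : e ∈ F
    · exact ih.tail ⟨e, he, hre⟩
    · exact ih.trans (hP y z (hPF e he y (hre ▸ Sym2.mem_mk_left _ _))
        (hPF e he z (hre ▸ Sym2.mem_mk_right _ _)))

theorem card_le_ncard_add_one_of_aggJoined [Finite E] (hF : ∀ x y, AggJoined r F x y) :
    Nat.card V ≤ F.ncard + 1 := by
  cases isEmpty_or_nonempty V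
  · simp
  calc Nat.card V ≤ Nat.card (edgeGraph r F).edgeSet + 1 :=
        (connected_edgeGraph hF).card_vert_le_card_edgeSet_add_one
    _ ≤ (r '' F).ncard + 1 := by
        rw [Nat.card_coe_set_eq, edgeGraph, SimpleGraph.edgeSet_fromEdgeSet]
        gcongr
        exacts [Set.toFinite _, Set.sdiff_subset]
    _ ≤ F.ncard + 1 := by gcongr; exact Set.ncard_image_le

theorem exists_aggJoined_ncard_add_one_eq [Finite V] [Nonempty V]
    (hconn : ∀ x y, AggJoined r Set.univ x y) :
    ∃ T : Set E, (∀ x y, AggJoined r T x y) ∧ T.ncard + 1 = Nat.card V := by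
  obtain ⟨S, hSG, hS⟩ := (connected_edgeGraph hconn).exists_isTree_le
  have hSr : ∀ z : S.edgeSet, ∃ e, r e = z := fun z => by
    have hz := SimpleGraph.edgeSet_subset_edgeSet.mpr hSG z.2
    rw [edgeGraph, SimpleGraph.edgeSet_fromEdgeSet] at hz
    obtain ⟨⟨e, -, hre⟩, -⟩ := hz
    exact ⟨e, hre⟩
  choose f hf using hSr
  have hfinj : Function.Injective f := fun z z' h => Subtype.ext (by rw [← hf, ← hf, h])
  refine ⟨Set.range f, fun x y => ?_, ?_⟩
  · refine reachable_edgeGraph_iff.mp ((hS.connected.preconnected x y).mono fun v w hvw => ?_)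
    exact ⟨⟨f ⟨_, hvw⟩, ⟨_, rfl⟩, hf _⟩, hvw.ne⟩
  · rw [Set.ncard_range_of_injective hfinj]
    exact (SimpleGraph.isTree_iff_connected_and_card.mp hS).2

end Connectivity

section Agglomeration

variable {r : E → Sym2 V} {a : (V → ℕ) × (E → ℕ)}

theorem IsAgg.eq_zero_of_fst_eq_zero (ha : IsAgg r a) (h : a.1 = 0) : a = 0 :=
  Prod.ext h <| funext fun e => Nat.le_zero.mp <| by
    simpa [h] using ha e _ (Sym2.out_fst_mem (r e))

theorem IsAgg.inf_one (ha : IsAgg r a) : IsAgg r (a ⊓ 1) := fun e v hv =>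
  min_le_min_right 1 (ha e v hv)

theorem IsAgg.tsub_inf_one (ha : IsAgg r a) : IsAgg r (a - a ⊓ 1) := fun e v hv => by
  have := ha e v hv
  simp only [Prod.fst_sub, Prod.snd_sub, Prod.fst_inf, Prod.snd_inf, Pi.sub_apply,
    Pi.inf_apply, Prod.fst_one, Prod.snd_one, Pi.one_apply]
  omega

theorem IsAtomAgg.le_one (ha : IsAtomAgg r a) : a ≤ 1 := by
  obtain ⟨hagg, hne, hatom⟩ := ha
  rcases hatom _ _ hagg.inf_one hagg.tsub_inf_one (add_tsub_cancel_of_le inf_le_left).symm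
    with h | h
  · exact absurd (by simpa [Prod.ext_iff, funext_iff] using h) hne
  · exact (tsub_eq_zero_iff_le.mp h).trans inf_le_right

noncomputable def restrictAgg (r : E → Sym2 V) (S : Set V) (a : (V → ℕ) × (E → ℕ)) :
    (V → ℕ) × (E → ℕ) :=
  (S.indicator a.1, {e | ∀ v ∈ r e, v ∈ S}.indicator a.2)

theorem IsAgg.restrictAgg (ha : IsAgg r a) (S : Set V) : IsAgg r (restrictAgg r S a) := by
  intro e v hv
  show {e | ∀ v ∈ r e, v ∈ S}.indicator a.2 e ≤ S.indicator a.1 v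
  by_cases he : ∀ w ∈ r e, w ∈ S
  · rw [Set.indicator_of_mem (he v hv),
      Set.indicator_of_mem (show e ∈ {e | ∀ v ∈ r e, v ∈ S} from he)]
    exact ha e v hv
  · rw [Set.indicator_of_notMem (show e ∉ {e | ∀ v ∈ r e, v ∈ S} from he)]
    exact Nat.zero_le _

theorem restrictAgg_add_restrictAgg_compl {S : Set V}
    (hS : ∀ e, a.2 e ≠ 0 → ∀ v ∈ r e, ∀ w ∈ r e, v ∈ S → w ∈ S) :
    restrictAgg r S a + restrictAgg r Sᶜ a = a := by
  refine Prod.ext (Set.indicator_self_add_compl S a.1) (funext fun e => ?_)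
  show {e | ∀ v ∈ r e, v ∈ S}.indicator a.2 e + {e | ∀ v ∈ r e, v ∈ Sᶜ}.indicator a.2 e = a.2 e
  by_cases hae : a.2 e = 0
  · simp [hae]
  have hv := Sym2.out_fst_mem (r e)
  by_cases hvS : (r e).out.1 ∈ S
  · have hall : ∀ w ∈ r e, w ∈ S := fun w hw => hS e hae _ hv w hw hvS
    rw [Set.indicator_of_mem (show e ∈ {e | ∀ v ∈ r e, v ∈ S} from hall),
      Set.indicator_of_notMem (show e ∉ {e | ∀ v ∈ r e, v ∈ Sᶜ} from fun h => h _ hv hvS),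
      add_zero]
  · have hall : ∀ w ∈ r e, w ∈ Sᶜ := fun w hw hwS => hvS (hS e hae w hw _ hv hwS)
    rw [Set.indicator_of_notMem (show e ∉ {e | ∀ v ∈ r e, v ∈ S} from fun h => hvS (h _ hv)),
      Set.indicator_of_mem (show e ∈ {e | ∀ v ∈ r e, v ∈ Sᶜ} from hall), zero_add]

theorem IsAtomAgg.mem_of_ne_zero {S : Set V} (ha : IsAtomAgg r a)
    (hS : ∀ e, a.2 e ≠ 0 → ∀ v ∈ r e, ∀ w ∈ r e, v ∈ S → w ∈ S) {v w : V} (hvS : v ∈ S)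
    (hv : a.1 v ≠ 0) (hw : a.1 w ≠ 0) : w ∈ S := by
  obtain ⟨hagg, -, hatom⟩ := ha
  rcases hatom _ _ (hagg.restrictAgg S) (hagg.restrictAgg Sᶜ)
    (restrictAgg_add_restrictAgg_compl hS).symm with h | h
  · have := congr_fun (congr_arg Prod.fst h) v
    simp [_root_.restrictAgg, hvS, hv] at this
  · by_contra hwS
    have := congr_fun (congr_arg Prod.fst h) w
    simp [_root_.restrictAgg, hwS, hw] at this

theorem IsAtomAgg.aggJoined_support (ha : IsAtomAgg r a) {v w : V} (hv : a.1 v ≠ 0)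
    (hw : a.1 w ≠ 0) : AggJoined r {e | a.2 e ≠ 0} v w := by
  refine ha.mem_of_ne_zero (S := {w | AggJoined r {e | a.2 e ≠ 0} v w}) ?_
    Relation.ReflTransGen.refl hv hw
  intro e he x hx y hy hxS
  by_cases hxy : x = y
  · exact hxy ▸ hxS
  · exact hxS.tail ⟨e, he, (Sym2.mem_and_mem_iff hxy).mp ⟨hx, hy⟩⟩

theorem isAtomAgg_one_indicator [Nonempty V] {T : Set E} (hT : ∀ x y, AggJoined r T x y) :
    IsAtomAgg r (1, T.indicator 1) := by
  have hagg : IsAgg r (1, T.indicator 1) := fun e v _ => by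
    by_cases he : e ∈ T <;> simp [he]
  refine ⟨hagg, fun h => one_ne_zero (congr_fun (congr_arg Prod.fst h) (Classical.arbitrary V)),
    fun b c hb hc hbc => ?_⟩
  have hsum : ∀ v, b.1 v + c.1 v = 1 := fun v => (congr_fun (congr_arg Prod.fst hbc) v).symm
  -- along an edge of `T`, the `1` on the edge goes to `b` or to `c`, and drags its endpoints along
  have hconst : ∀ x y, b.1 x = b.1 y := fun x y => (hT x y).eq_of_forall_edge
    fun e he x hx y hy => by
      have hbce : b.2 e + c.2 e = 1 := by
        simpa [Set.indicator_of_mem he] using (congr_fun (congr_arg Prod.snd hbc) e).symm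
      have := hb e x hx; have := hb e y hy; have := hc e x hx; have := hc e y hy
      have := hsum x; have := hsum y
      omega
  obtain ⟨v₀⟩ := ‹Nonempty V›
  rcases Nat.eq_zero_or_pos (b.1 v₀) with h₀ | h₀
  · exact .inl <| hb.eq_zero_of_fst_eq_zero <| funext fun v => (hconst v v₀).trans h₀
  · refine .inr <| hc.eq_zero_of_fst_eq_zero <| funext fun v => ?_
    have := hsum v; have := hsum v₀; have := hconst v v₀
    show c.1 v = 0
    omega

end Agglomeration

open Classical in
theorem Sym2.sum_toFinset_sub_le [DecidableEq V] {z : Sym2 V} {x : V → ℕ} {y : ℕ}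
    (hy : ∀ v ∈ z, y ≤ x v) (hx : ∀ v ∈ z, x v ≤ 1) :
    (∑ v ∈ z.toFinset, (x v : ℤ)) - y ≤ 2 - if y ≠ 0 ∨ ∃ v ∈ z, x v = 0 then 1 else 0 := by
  induction z using Sym2.ind with
  | _ u w =>
    have := hy u (Sym2.mem_mk_left u w); have := hy w (Sym2.mem_mk_right u w)
    have := hx u (Sym2.mem_mk_left u w); have := hx w (Sym2.mem_mk_right u w)
    rw [Sym2.toFinset_mk_eq]
    by_cases huw : u = w
    · subst huw
      simp only [Finset.pair_eq_singleton, Finset.sum_singleton, Sym2.mem_iff, or_self,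
        exists_eq_left]
      split_ifs <;> omega
    · rw [Finset.sum_pair huw]
      simp only [Sym2.mem_iff, exists_eq_or_imp, exists_eq_left]
      split_ifs <;> omega

section Length

variable [Fintype V] [Fintype E] {r : E → Sym2 V}

noncomputable def aggLength (r : E → Sym2 V) (a : (V → ℕ) × (E → ℕ)) : ℤ :=
  (∑ v : V, (Nat.card {e : E // v ∈ r e} : ℤ) * a.1 v) - ∑ e : E, (a.2 e : ℤ)

theorem aggLength_eq_sum_edges [DecidableEq V] (a : (V → ℕ) × (E → ℕ)) :
    aggLength r a = ∑ e, ((∑ v ∈ (r e).toFinset, (a.1 v : ℤ)) - a.2 e) := by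
  rw [aggLength, Finset.sum_sub_distrib]
  congr 1
  calc ∑ v, (Nat.card {e : E // v ∈ r e} : ℤ) * a.1 v
      = ∑ v, ∑ e, if v ∈ r e then (a.1 v : ℤ) else 0 := by
        simp [Finset.sum_ite, Fintype.card_subtype]
    _ = ∑ e, ∑ v ∈ (r e).toFinset, (a.1 v : ℤ) := by
        rw [Finset.sum_comm]
        refine Finset.sum_congr rfl fun e _ => ?_
        rw [Finset.sum_ite, Finset.sum_const_zero, add_zero]
        exact Finset.sum_congr (by ext; simp [Sym2.mem_toFinset]) fun _ _ => rfl

theorem sum_two_sub_indicator (F : Set E) :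
    ∑ e, (2 - F.indicator (1 : E → ℤ) e) = 2 * Fintype.card E - F.ncard := by
  classical
  simp [Finset.sum_sub_distrib, Set.indicator_apply, Finset.sum_boole,
    Set.ncard_eq_toFinset_card', mul_comm]

theorem IsAtomAgg.aggLength_le {a : (V → ℕ) × (E → ℕ)} (ha : IsAtomAgg r a)
    (hconn : ∀ x y, AggJoined r Set.univ x y) :
    aggLength r a ≤ 2 * Fintype.card E - Fintype.card V + 1 := by
  classical
  have ha₁ : ∀ v, a.1 v ≤ 1 := ha.le_one.1
  set F : Set E := {e | a.2 e ≠ 0 ∨ ∃ v ∈ r e, a.1 v = 0}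
  have hF : ∀ x y, AggJoined r F x y := fun x y =>
    aggJoined_of_forall_not_mem (P := (a.1 · ≠ 0))
      (fun x y hx hy => (ha.aggJoined_support hx hy).mono fun e he => Or.inl he)
      (fun e he v hv hv₀ => he (Or.inr ⟨v, hv, hv₀⟩)) (hconn x y)
  have hcard := card_le_ncard_add_one_of_aggJoined hF
  rw [Nat.card_eq_fintype_card] at hcard
  rw [aggLength_eq_sum_edges]
  calc _ ≤ ∑ e, (2 - F.indicator (1 : E → ℤ) e) := Finset.sum_le_sum fun e _ => by
        refine (Sym2.sum_toFinset_sub_le (ha.1 e) fun v _ => ha₁ v).trans_eq ?_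
        rw [Set.indicator_apply, Pi.one_apply]
        congr
    _ = 2 * Fintype.card E - F.ncard := sum_two_sub_indicator F
    _ ≤ _ := by omega

theorem aggLength_one_indicator (hr : ∀ e, ¬ (r e).IsDiag) (T : Set E) :
    aggLength r (1, T.indicator 1) = 2 * Fintype.card E - T.ncard := by
  classical
  rw [aggLength_eq_sum_edges, ← sum_two_sub_indicator]
  refine Finset.sum_congr rfl fun e _ => ?_
  simp [Sym2.card_toFinset_of_not_isDiag _ (hr e), Set.indicator_apply]

end Length

end

/-- **Davenport constant of `A(G)`**: for a connected graph `G` with at least two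
vertices, the maximum of the sequence-length
`ℓ(a) = Σ_v deg(v)·a_V(v) − Σ_e a_E(e)` over all atoms `a` of `A(G)` equals
`2|E| − |V| + 1`. -/
theorem davenport_constant {V E : Type*} [Fintype V] [Fintype E]
    (r : E → Sym2 V) (hr : ∀ e : E, ¬ (r e).IsDiag)
    (hconn : ∀ x y : V, AggJoined r Set.univ x y)
    (hV : 2 ≤ Fintype.card V) :
    (∀ a : (V → ℕ) × (E → ℕ), IsAtomAgg r a →
      (∑ v : V, (Nat.card {e : E // v ∈ r e} : ℤ) * a.1 v) - ∑ e : E, (a.2 e : ℤ)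
        ≤ 2 * (Fintype.card E : ℤ) - (Fintype.card V : ℤ) + 1) ∧
    (∃ a : (V → ℕ) × (E → ℕ), IsAtomAgg r a ∧
      (∑ v : V, (Nat.card {e : E // v ∈ r e} : ℤ) * a.1 v) - ∑ e : E, (a.2 e : ℤ)
        = 2 * (Fintype.card E : ℤ) - (Fintype.card V : ℤ) + 1) := by
  have : Nonempty V := Fintype.card_pos_iff.mp (by omega)
  obtain ⟨T, hT, hTcard⟩ := exists_aggJoined_ncard_add_one_eq hconn
  rw [Nat.card_eq_fintype_card] at hTcard
  refine ⟨fun a ha => ha.aggLength_le hconn, (1, T.indicator 1), isAtomAgg_one_indicator hT, ?_⟩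
  rw [← aggLength, aggLength_one_indicator hr, ← hTcard]
  push_cast
  ring
end

section
/- Prime atoms of A(G): Let G = (V,E,r) be a graph and let a be an atom of A(G) with support (V_a, E_a). Then a is a prime element of A(G) — meaning that whenever a is a summand of b + c for some b, c ∈ A(G), then a is a summand of b or a is a summand of c — if and only if deg(v) ≤ 1 for every vertex v ∈ V_a. -/
/-- `b` is a summand of `a` in the monoid of agglomerations. -/
def IsSummandAgg {V E : Type*} (r : E → Sym2 V) (b a : (V → ℕ) × (E → ℕ)) : Prop :=
  ∃ c : (V → ℕ) × (E → ℕ), IsAgg r c ∧ a = b + c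

section Aux
variable {V E : Type*} [DecidableEq V] [DecidableEq E] {r : E → Sym2 V}

/-- If `a` is an atom, `v` is in its support, and no edge at `v` is in the support,
then `a` is the delta at `v`. -/
lemma atom_delta {a : (V → ℕ) × (E → ℕ)} (ha : IsAtomAgg r a)
    {v : V} (hv : 0 < a.1 v) (h0 : ∀ e, v ∈ r e → a.2 e = 0) :
    a = (fun u => if u = v then 1 else 0, 0) := by
  obtain ⟨hAgg, hNe, hAtom⟩ := ha
  have hb : IsAgg r ((fun u => if u = v then 1 else 0, 0) : (V → ℕ) × (E → ℕ)) := by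
    intro e u _; simp
  have hc : IsAgg r ((fun u => a.1 u - if u = v then 1 else 0, a.2) : (V → ℕ) × (E → ℕ)) := by
    intro e u hu
    by_cases huv : u = v
    · subst huv; have := h0 e hu; simp only; omega
    · simp only [if_neg huv]; have := hAgg e u hu; omega
  have hsum : a = (fun u => if u = v then 1 else 0, 0) +
      (fun u => a.1 u - if u = v then 1 else 0, a.2) := by
    refine Prod.ext ?_ ?_
    · funext u
      simp only [Prod.fst_add, Pi.add_apply]
      by_cases huv : u = v
      · subst huv; simp only [if_pos rfl, if_true]; omega
      · simp [if_neg huv]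
    · funext e
      simp [Prod.snd_add]
  rcases hAtom _ _ hb hc hsum with h | h
  · exact absurd (congrFun (congrArg Prod.fst h) v) (by simp)
  · have h1 : ∀ u, a.1 u - (if u = v then 1 else 0) = 0 :=
      fun u => congrFun (congrArg Prod.fst h) u
    have h2 : a.2 = 0 := congrArg Prod.snd h
    refine Prod.ext ?_ (by simpa using h2)
    funext u
    have := h1 u
    by_cases huv : u = v
    · subst huv; simp only [if_pos rfl, if_true] at this ⊢; omega
    · simp only [if_neg huv] at this ⊢; omega

/-- If `a` is an atom containing an edge `f`, whose endpoints `v ≠ w` have `f` as their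
unique incident edge, then `a` is the edge atom of `f`. -/
lemma atom_edge {a : (V → ℕ) × (E → ℕ)} (ha : IsAtomAgg r a)
    {f : E} {v w : V} (hvf : v ∈ r f) (hwf : w ∈ r f) (hvw : v ≠ w)
    (hrf : ∀ u, u ∈ r f → u = v ∨ u = w) (haf : 1 ≤ a.2 f)
    (huv : ∀ e, v ∈ r e → e = f) (huw : ∀ e, w ∈ r e → e = f) :
    a = (fun u => (if u = v then 1 else 0) + (if u = w then 1 else 0),
         fun e => if e = f then 1 else 0) := by
  obtain ⟨hAgg, hNe, hAtom⟩ := ha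
  have hav : 1 ≤ a.1 v := le_trans haf (hAgg f v hvf)
  have haw : 1 ≤ a.1 w := le_trans haf (hAgg f w hwf)
  have hb : IsAgg r ((fun u => (if u = v then 1 else 0) + (if u = w then 1 else 0),
      fun e => if e = f then 1 else 0) : (V → ℕ) × (E → ℕ)) := by
    intro e u hu
    by_cases hef : e = f
    · subst hef
      rcases hrf u hu with h | h <;> subst h <;> simp [hvw, hvw.symm]
    · simp [if_neg hef]
  have hc : IsAgg r ((fun u => a.1 u - ((if u = v then 1 else 0) + (if u = w then 1 else 0)),
      fun e => a.2 e - if e = f then 1 else 0) : (V → ℕ) × (E → ℕ)) := by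
    intro e u hu
    by_cases huv' : u = v
    · subst huv'
      have hef := huv e hu; subst hef
      have h1 := hAgg e u hu
      simp only [if_pos rfl, if_true, if_neg hvw]
      omega
    · by_cases huw' : u = w
      · have hef := huw e (huw' ▸ hu); subst hef
        have h1u := hAgg e u hu
        subst huw'
        simp only [if_pos rfl, if_true, if_neg huv']
        omega
      · have h1 := hAgg e u hu
        simp only [if_neg huv', if_neg huw']
        omega
  have hsum : a = (fun u => (if u = v then 1 else 0) + (if u = w then 1 else 0),
         fun e => if e = f then 1 else 0) +
      (fun u => a.1 u - ((if u = v then 1 else 0) + (if u = w then 1 else 0)),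
      fun e => a.2 e - if e = f then 1 else 0) := by
    refine Prod.ext ?_ ?_
    · funext u
      simp only [Prod.fst_add, Pi.add_apply]
      by_cases huv' : u = v
      · subst huv'; simp only [if_pos rfl, if_true, if_neg hvw]; omega
      · by_cases huw' : u = w
        · subst huw'
          simp only [if_pos rfl, if_true, if_neg (fun h : u = v => huv' h)]
          omega
        · simp only [if_neg huv', if_neg huw']; omega
    · funext e
      simp only [Prod.snd_add, Pi.add_apply]
      by_cases hef : e = f
      · subst hef; simp only [if_pos rfl, if_true]; omega
      · simp only [if_neg hef]; omega
  rcases hAtom _ _ hb hc hsum with h | h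
  · exact absurd (congrFun (congrArg Prod.snd h) f) (by simp)
  · have h1 : ∀ u, a.1 u - ((if u = v then 1 else 0) + (if u = w then 1 else 0)) = 0 :=
      fun u => congrFun (congrArg Prod.fst h) u
    have h2 : ∀ e, a.2 e - (if e = f then 1 else 0) = 0 :=
      fun e => congrFun (congrArg Prod.snd h) e
    refine Prod.ext ?_ ?_
    · funext u
      have := h1 u
      by_cases huv' : u = v
      · subst huv'; simp only [if_pos rfl, if_true, if_neg hvw] at this ⊢; omega
      · by_cases huw' : u = w
        · subst huw'
          simp only [if_pos rfl, if_true, if_neg (fun h : u = v => huv' h)] at this ⊢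
          omega
        · simp only [if_neg huv', if_neg huw'] at this ⊢; omega
    · funext e
      have := h2 e
      by_cases hef : e = f
      · subst hef; simp only [if_pos rfl, if_true] at this ⊢; omega
      · simp only [if_neg hef] at this ⊢; omega
end Aux

/-- **Prime atoms of `A(G)`**: an atom `a` of `A(G)` is a prime element if and only if
every vertex of the support of `a` has degree at most `1` in `G`. -/
theorem prime_atoms {V E : Type*} [Fintype V] [Fintype E]
    (r : E → Sym2 V) (hr : ∀ e : E, ¬ (r e).IsDiag)
    (a : (V → ℕ) × (E → ℕ)) (ha : IsAtomAgg r a) :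
    (∀ b c : (V → ℕ) × (E → ℕ), IsAgg r b → IsAgg r c →
      IsSummandAgg r a (b + c) → IsSummandAgg r a b ∨ IsSummandAgg r a c) ↔
    ∀ v : V, 0 < a.1 v → Nat.card {e : E // v ∈ r e} ≤ 1 := by
  classical
  have haAgg := ha.1
  have haNe := ha.2.1
  constructor
  · -- prime → all support vertices have degree ≤ 1
    intro hp v hv
    by_contra hcard
    have hnt : Nontrivial {e : E // v ∈ r e} :=
      Finite.one_lt_card_iff_nontrivial.mp (lt_of_not_ge hcard)
    obtain ⟨⟨e1, he1⟩, ⟨e2, he2⟩, hne12⟩ := hnt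
    have hne : e1 ≠ e2 := fun h => hne12 (Subtype.ext h)
    by_cases hex : ∃ f, v ∈ r f ∧ 1 ≤ a.2 f
    · -- some edge at v is in the support
      obtain ⟨f, hvf, haf⟩ := hex
      have hwv : Sym2.Mem.other hvf ≠ v := Sym2.other_ne (hr f) hvf
      set w := Sym2.Mem.other hvf with hwdef
      have hwmem : w ∈ r f := Sym2.other_mem hvf
      have hmemf : ∀ u, u ∈ r f → u = v ∨ u = w := by
        intro u hu
        rw [← Sym2.other_spec hvf] at hu
        exact Sym2.mem_iff.mp hu
      -- construction (1)
      set b : (V → ℕ) × (E → ℕ) :=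
        (a.1, fun e => a.2 e - if e = f then 1 else 0) with hbdef
      set c : (V → ℕ) × (E → ℕ) :=
        (fun u => (if u = v then 1 else 0) + (if u = w then 1 else 0),
         fun e => if e = f then 1 else 0) with hcdef
      set d : (V → ℕ) × (E → ℕ) :=
        (fun u => (if u = v then 1 else 0) + (if u = w then 1 else 0),
         (0 : E → ℕ)) with hddef
      have hb : IsAgg r b := fun e u hu => le_trans (Nat.sub_le _ _) (haAgg e u hu)
      have hc : IsAgg r c := by
        intro e u hu
        by_cases hef : e = f
        · subst hef
          rcases hmemf u hu with h | h <;> subst h <;>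
            simp only [hcdef, if_pos rfl, if_true] <;> omega
        · simp [hcdef, if_neg hef]
      have hd : IsAgg r d := fun e u hu => Nat.zero_le _
      have key : b + c = a + d := by
        refine Prod.ext rfl ?_
        funext e
        simp only [hbdef, hcdef, hddef, Prod.snd_add, Pi.add_apply, Pi.zero_apply]
        by_cases hef : e = f
        · subst hef; simp only [if_pos rfl, if_true]; omega
        · simp only [if_neg hef]; omega
      rcases hp b c hb hc ⟨d, hd, key⟩ with ⟨x, hx, hxe⟩ | ⟨x, hx, hxe⟩
      · -- a summand of b : impossible at f
        have h1 := congrFun (congrArg Prod.snd hxe) f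
        simp only [hbdef, Prod.snd_add, Pi.add_apply, if_pos rfl, if_true] at h1
        omega
      · -- a summand of c : forces a = c, then second construction
        have hV : ∀ u, (if u = v then 1 else 0) + (if u = w then 1 else 0)
            = a.1 u + x.1 u := by
          intro u
          have h1 := congrFun (congrArg Prod.fst hxe) u
          simpa only [hcdef, Prod.fst_add, Pi.add_apply] using h1
        have hE2 : ∀ e, (if e = f then 1 else 0) = a.2 e + x.2 e := by
          intro e
          have h1 := congrFun (congrArg Prod.snd hxe) e
          simpa only [hcdef, Prod.snd_add, Pi.add_apply] using h1
        have haf1 : a.2 f = 1 := by have := hE2 f; rw [if_pos rfl] at this; omega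
        have hav : a.1 v = 1 := by
          have := hV v
          rw [if_pos rfl, if_neg (fun h : v = w => hwv h.symm)] at this
          omega
        have haw1 : a.1 w = 1 := by
          have h1 := hV w
          have h2 : a.2 f ≤ a.1 w := haAgg f w hwmem
          rw [if_pos rfl, if_neg hwv] at h1
          omega
        have hac : a = c := by
          refine Prod.ext ?_ ?_
          · funext u
            simp only [hcdef]
            by_cases huv : u = v
            · subst huv
              rw [if_pos rfl, if_neg (fun h : u = w => hwv h.symm)]
              omega
            · by_cases huw : u = w
              · subst huw
                rw [if_neg huv, if_pos rfl]
                omega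
              · have := hV u
                rw [if_neg huv, if_neg huw] at this ⊢
                omega
          · funext e
            simp only [hcdef]
            by_cases hef : e = f
            · subst hef; rw [if_pos rfl]; omega
            · have := hE2 e; rw [if_neg hef] at this ⊢; omega
        have final : ∀ g, v ∈ r g → g ≠ f → False := by
          intro g hvg hgf
          have hwgv : Sym2.Mem.other hvg ≠ v := Sym2.other_ne (hr g) hvg
          set wg := Sym2.Mem.other hvg with hwgdef
          have hwgmem : wg ∈ r g := Sym2.other_mem hvg
          have hmemg : ∀ u, u ∈ r g → u = v ∨ u = wg := by
            intro u hu
            rw [← Sym2.other_spec hvg] at hu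
            exact Sym2.mem_iff.mp hu
          set b' : (V → ℕ) × (E → ℕ) :=
            (fun u => (if u = v then 1 else 0) + (if u = wg then 1 else 0)
              + (if u = w then 1 else 0),
             fun e => (if e = g then 1 else 0) + (if e = f then 1 else 0)) with hb'def
          set c' : (V → ℕ) × (E → ℕ) :=
            (fun u => if u = v then 1 else 0, (0 : E → ℕ)) with hc'def
          set d' : (V → ℕ) × (E → ℕ) :=
            (fun u => (if u = v then 1 else 0) + (if u = wg then 1 else 0),
             fun e => if e = g then 1 else 0) with hd'def
          have hb' : IsAgg r b' := by
            intro e u hu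
            simp only [hb'def]
            by_cases heg : e = g
            · subst heg
              rcases hmemg u hu with h | h <;> subst h <;>
                simp only [if_pos rfl, if_true, if_neg hgf] <;> omega
            · by_cases hef : e = f
              · subst hef
                rcases hmemf u hu with h | h <;> subst h <;>
                  simp only [if_pos rfl, if_true, if_neg heg] <;> omega
              · simp only [if_neg heg, if_neg hef]; omega
          have hc' : IsAgg r c' := fun e u hu => Nat.zero_le _
          have hd' : IsAgg r d' := by
            intro e u hu
            simp only [hd'def]
            by_cases heg : e = g
            · subst heg
              rcases hmemg u hu with h | h <;> subst h <;>
                simp only [if_pos rfl, if_true] <;> omega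
            · simp only [if_neg heg]; omega
          have key' : b' + c' = a + d' := by
            rw [hac]
            refine Prod.ext ?_ ?_
            · funext u
              simp only [hb'def, hc'def, hd'def, hcdef, Prod.fst_add, Pi.add_apply]
              split_ifs <;> omega
            · funext e
              simp only [hb'def, hc'def, hd'def, hcdef, Prod.snd_add, Pi.add_apply,
                Pi.zero_apply]
              split_ifs <;> omega
          rcases hp b' c' hb' hc' ⟨d', hd', key'⟩ with ⟨y, hy, hye⟩ | ⟨y, hy, hye⟩
          · have h1 := congrFun (congrArg Prod.fst hye) v
            have h2 := congrFun (congrArg Prod.snd hye) g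
            have h3 := hy g v hvg
            have hag : a.2 g = 0 := by
              have := congrFun (congrArg Prod.snd hac) g
              simpa only [hcdef, if_neg hgf] using this
            simp only [hb'def, Prod.fst_add, Prod.snd_add, Pi.add_apply, if_pos rfl,
              if_true, if_neg (fun h : v = wg => hwgv h.symm),
              if_neg (fun h : v = w => hwv h.symm), if_neg hgf] at h1 h2
            omega
          · have h1 := congrFun (congrArg Prod.fst hye) w
            simp only [hc'def, Prod.fst_add, Pi.add_apply, if_neg hwv] at h1
            omega
        by_cases h1f : e1 = f
        · exact final e2 he2 (fun h => hne (h1f.trans h.symm))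
        · exact final e1 he1 h1f
    · -- no supported edge at v : a is the delta at v
      push_neg at hex
      have h0 : ∀ e, v ∈ r e → a.2 e = 0 := fun e he => by have := hex e he; omega
      have hadelta := atom_delta ha hv h0
      have ha1 : a.1 v = 1 := by
        have := congrFun (congrArg Prod.fst hadelta) v; simpa using this
      have ha2 : ∀ g, a.2 g = 0 := by
        intro g
        have := congrFun (congrArg Prod.snd hadelta) g; simpa using this
      have refute : ∀ (p : (V → ℕ) × (E → ℕ)) g, v ∈ r g → p.1 v = 1 → p.2 g = 1 →
          IsSummandAgg r a p → False := by
        rintro p g hvg hp1 hp2 ⟨x, hx, hxe⟩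
        have h1 := congrFun (congrArg Prod.fst hxe) v
        have h2 := congrFun (congrArg Prod.snd hxe) g
        have h3 := hx g v hvg
        have h4 := ha2 g
        simp only [Prod.fst_add, Prod.snd_add, Pi.add_apply] at h1 h2
        omega
      have hw1v : Sym2.Mem.other he1 ≠ v := Sym2.other_ne (hr e1) he1
      set w1 := Sym2.Mem.other he1 with hw1def
      have hw1mem : w1 ∈ r e1 := Sym2.other_mem he1
      have hmem1 : ∀ u, u ∈ r e1 → u = v ∨ u = w1 := by
        intro u hu
        rw [← Sym2.other_spec he1] at hu
        exact Sym2.mem_iff.mp hu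
      have hw2v : Sym2.Mem.other he2 ≠ v := Sym2.other_ne (hr e2) he2
      set w2 := Sym2.Mem.other he2 with hw2def
      have hw2mem : w2 ∈ r e2 := Sym2.other_mem he2
      have hmem2 : ∀ u, u ∈ r e2 → u = v ∨ u = w2 := by
        intro u hu
        rw [← Sym2.other_spec he2] at hu
        exact Sym2.mem_iff.mp hu
      set b : (V → ℕ) × (E → ℕ) :=
        (fun u => (if u = v then 1 else 0) + (if u = w1 then 1 else 0),
         fun e => if e = e1 then 1 else 0) with hbdef
      set c : (V → ℕ) × (E → ℕ) :=
        (fun u => (if u = v then 1 else 0) + (if u = w2 then 1 else 0),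
         fun e => if e = e2 then 1 else 0) with hcdef
      set d : (V → ℕ) × (E → ℕ) :=
        (fun u => (if u = v then 1 else 0) + (if u = w1 then 1 else 0)
           + (if u = w2 then 1 else 0),
         fun e => (if e = e1 then 1 else 0) + (if e = e2 then 1 else 0)) with hddef
      have hb : IsAgg r b := by
        intro e u hu
        simp only [hbdef]
        by_cases he : e = e1
        · subst he
          rcases hmem1 u hu with h | h <;> subst h <;>
            simp only [if_pos rfl, if_true] <;> omega
        · simp only [if_neg he]; omega
      have hc : IsAgg r c := by
        intro e u hu
        simp only [hcdef]
        by_cases he : e = e2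
        · subst he
          rcases hmem2 u hu with h | h <;> subst h <;>
            simp only [if_pos rfl, if_true] <;> omega
        · simp only [if_neg he]; omega
      have hd : IsAgg r d := by
        intro e u hu
        simp only [hddef]
        by_cases he : e = e1
        · subst he
          rcases hmem1 u hu with h | h <;> subst h <;>
            simp only [if_pos rfl, if_true, if_neg hne] <;> omega
        · by_cases he' : e = e2
          · subst he'
            rcases hmem2 u hu with h | h <;> subst h <;>
              simp only [if_pos rfl, if_true, if_neg he] <;> omega
          · simp only [if_neg he, if_neg he']; omega
      have key : b + c = a + d := by
        rw [hadelta]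
        refine Prod.ext ?_ ?_
        · funext u
          simp only [hbdef, hcdef, hddef, Prod.fst_add, Pi.add_apply]
          split_ifs <;> omega
        · funext e
          simp only [hbdef, hcdef, hddef, Prod.snd_add, Pi.add_apply, Pi.zero_apply]
          split_ifs <;> omega
      rcases hp b c hb hc ⟨d, hd, key⟩ with h | h
      · refine refute b e1 he1 ?_ ?_ h
        · have hvw1 : v ≠ w1 := fun h => hw1v h.symm
          simp [hbdef, hvw1]
        · simp [hbdef]
      · refine refute c e2 he2 ?_ ?_ h
        · have hvw2 : v ≠ w2 := fun h => hw2v h.symm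
          simp [hcdef, hvw2]
        · simp [hcdef]
  · -- degree ≤ 1 on support → prime
    intro hdeg b c hb hc hsum
    obtain ⟨d, hd, heq⟩ := hsum
    have huniq : ∀ u, 0 < a.1 u → ∀ e e', u ∈ r e → u ∈ r e' → e = e' := by
      intro u hu e e' he he'
      have hs := Finite.card_le_one_iff_subsingleton.mp (hdeg u hu)
      exact congrArg Subtype.val (@Subsingleton.elim _ hs ⟨e, he⟩ ⟨e', he'⟩)
    have hex0 : ∃ v, 0 < a.1 v := by
      by_contra h
      push_neg at h
      apply haNe
      refine Prod.ext ?_ ?_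
      · funext u; have := h u; simpa using Nat.le_zero.mp this
      · funext e
        have h1 := haAgg e (r e).out.1 (Sym2.out_fst_mem (r e))
        have h2 := h (r e).out.1
        simpa using by omega
    obtain ⟨v0, hv0⟩ := hex0
    by_cases hex : ∃ f, v0 ∈ r f ∧ 1 ≤ a.2 f
    · -- a is an edge atom
      obtain ⟨f, hvf, haf⟩ := hex
      have hwv : Sym2.Mem.other hvf ≠ v0 := Sym2.other_ne (hr f) hvf
      set w := Sym2.Mem.other hvf with hwdef
      have hwmem : w ∈ r f := Sym2.other_mem hvf
      have hmemf : ∀ u, u ∈ r f → u = v0 ∨ u = w := by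
        intro u hu
        rw [← Sym2.other_spec hvf] at hu
        exact Sym2.mem_iff.mp hu
      have haw : 0 < a.1 w := lt_of_lt_of_le haf (haAgg f w hwmem)
      have huniqv : ∀ e, v0 ∈ r e → e = f := fun e he => huniq v0 hv0 e f he hvf
      have huniqw : ∀ e, w ∈ r e → e = f := fun e he => huniq w haw e f he hwmem
      have hae := atom_edge ha hvf hwmem (Ne.symm hwv) hmemf haf huniqv huniqw
      have haf2 : a.2 f = 1 := by
        have := congrFun (congrArg Prod.snd hae) f; simpa using this
      have hEf := congrFun (congrArg Prod.snd heq) f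
      simp only [Prod.snd_add, Pi.add_apply] at hEf
      have main : ∀ p : (V → ℕ) × (E → ℕ), IsAgg r p → 1 ≤ p.2 f →
          IsSummandAgg r a p := by
        intro p hpAgg hpf
        have hpv : 1 ≤ p.1 v0 := le_trans hpf (hpAgg f v0 hvf)
        have hpw : 1 ≤ p.1 w := le_trans hpf (hpAgg f w hwmem)
        set x : (V → ℕ) × (E → ℕ) :=
          (fun u => p.1 u - ((if u = v0 then 1 else 0) + (if u = w then 1 else 0)),
           fun e => p.2 e - if e = f then 1 else 0) with hxdef
        refine ⟨x, ?_, ?_⟩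
        · intro e u hu
          simp only [hxdef]
          by_cases huv : u = v0
          · have hef : e = f := by rw [huv] at hu; exact huniqv e hu
            have h1 := hpAgg e u hu
            rw [if_pos hef, if_pos huv, if_neg (fun h : u = w => hwv (h.symm.trans huv))]
            omega
          · by_cases huw : u = w
            · have hef : e = f := by rw [huw] at hu; exact huniqw e hu
              have h1 := hpAgg e u hu
              rw [if_pos hef, if_neg huv, if_pos huw]
              omega
            · have h1 := hpAgg e u hu
              rw [if_neg huv, if_neg huw]
              omega
        · rw [hae]
          refine Prod.ext ?_ ?_
          · funext u
            simp only [hxdef, Prod.fst_add, Pi.add_apply]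
            by_cases huv : u = v0
            · rw [huv, if_pos rfl, if_neg (fun h : v0 = w => hwv h.symm)]
              omega
            · by_cases huw : u = w
              · rw [huw, if_neg (fun h : w = v0 => hwv h), if_pos rfl]
                omega
              · rw [if_neg huv, if_neg huw]
                omega
          · funext e
            simp only [hxdef, Prod.snd_add, Pi.add_apply]
            by_cases hef : e = f
            · rw [hef, if_pos rfl]; omega
            · rw [if_neg hef]; omega
      by_cases hbf : 1 ≤ b.2 f
      · exact Or.inl (main b hb hbf)
      · have hcf : 1 ≤ c.2 f := by omega
        exact Or.inr (main c hc hcf)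
    · -- a is a vertex atom
      push_neg at hex
      have h0 : ∀ e, v0 ∈ r e → a.2 e = 0 := fun e he => by have := hex e he; omega
      have hadelta := atom_delta ha hv0 h0
      have ha1 : a.1 v0 = 1 := by
        have := congrFun (congrArg Prod.fst hadelta) v0; simpa using this
      have ha2 : ∀ g, a.2 g = 0 := by
        intro g
        have := congrFun (congrArg Prod.snd hadelta) g; simpa using this
      have hVv := congrFun (congrArg Prod.fst heq) v0
      simp only [Prod.fst_add, Pi.add_apply] at hVv
      have main : ∀ p : (V → ℕ) × (E → ℕ), IsAgg r p →
          (∀ e, v0 ∈ r e → p.2 e + 1 ≤ p.1 v0) → 1 ≤ p.1 v0 → IsSummandAgg r a p := by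
        intro p hpAgg hslack hpv
        set x : (V → ℕ) × (E → ℕ) :=
          (fun u => p.1 u - if u = v0 then 1 else 0, p.2) with hxdef
        refine ⟨x, ?_, ?_⟩
        · intro e u hu
          simp only [hxdef]
          by_cases huv : u = v0
          · have h1 : p.2 e + 1 ≤ p.1 v0 := hslack e (by rw [huv] at hu; exact hu)
            rw [huv, if_pos rfl]
            omega
          · rw [if_neg huv]
            exact hpAgg e u hu
        · rw [hadelta]
          refine Prod.ext ?_ ?_
          · funext u
            simp only [hxdef, Prod.fst_add, Pi.add_apply]
            by_cases huv : u = v0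
            · rw [huv, if_pos rfl]; omega
            · rw [if_neg huv]; omega
          · funext e
            simp only [hxdef, Prod.snd_add, Pi.add_apply, Pi.zero_apply]
            omega
      by_cases hE0 : ∃ h, v0 ∈ r h
      · obtain ⟨g, hg⟩ := hE0
        have hguniq : ∀ e, v0 ∈ r e → e = g := fun e he => huniq v0 hv0 e g he hg
        have hdg := hd g v0 hg
        have hEg := congrFun (congrArg Prod.snd heq) g
        simp only [Prod.snd_add, Pi.add_apply] at hEg
        have hbg := hb g v0 hg
        have hcg := hc g v0 hg
        have hag := ha2 g
        by_cases hcase : b.2 g + 1 ≤ b.1 v0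
        · refine Or.inl (main b hb (fun e he => ?_) (by omega))
          rw [hguniq e he]; exact hcase
        · have hcase2 : c.2 g + 1 ≤ c.1 v0 := by omega
          refine Or.inr (main c hc (fun e he => ?_) (by omega))
          rw [hguniq e he]; exact hcase2
      · push_neg at hE0
        by_cases hcase : 1 ≤ b.1 v0
        · exact Or.inl (main b hb (fun e he => absurd he (hE0 e)) hcase)
        · have hcase2 : 1 ≤ c.1 v0 := by omega
          exact Or.inr (main c hc (fun e he => absurd he (hE0 e)) hcase2)
end

section
/- Absolute irreducibility of atoms: Let G = (V,E,r) be a graph, let a be an atom of A(G), let b ∈ A(G), and let n ≥ 1. If a is a summand of n·b in A(G), then a is a summand of b in A(G). Consequently, every atom of A(G) is absolutely irreducible: for every n ≥ 1, whenever n·a = b₁ + ⋯ + b_k with all b_i atoms of A(G), then k = n and b_i = a for every i. -/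
open Classical in
/-- Structure of atoms: either a vertex indicator, or a `{0,1}`-valued edge function
together with the indicator of its incident vertices. -/
lemma agg_atom_char {V E : Type*} (r : E → Sym2 V)
    (a : (V → ℕ) × (E → ℕ)) (ha : IsAtomAgg r a) :
    (∃ v : V, a = (fun w => if w = v then 1 else 0, 0)) ∨
    ((∀ e, a.2 e ≤ 1) ∧ ∀ v, a.1 v = if ∃ e, a.2 e ≠ 0 ∧ v ∈ r e then 1 else 0) := by
  classical
  obtain ⟨haA, hane, hatom⟩ := ha
  by_cases hg : a.2 = 0
  · left
    obtain ⟨v, hv⟩ : ∃ v, a.1 v ≠ 0 := by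
      by_contra h
      push_neg at h
      exact hane (Prod.ext (funext fun v => h v) hg)
    have hb : IsAgg r ((fun w => if w = v then 1 else 0, 0) : (V → ℕ) × (E → ℕ)) :=
      fun e w _ => Nat.zero_le _
    have hc : IsAgg r ((fun w => a.1 w - (if w = v then 1 else 0), 0) : (V → ℕ) × (E → ℕ)) :=
      fun e w _ => Nat.zero_le _
    have hsum : a = ((fun w => if w = v then 1 else 0, 0) : (V → ℕ) × (E → ℕ))
        + (fun w => a.1 w - (if w = v then 1 else 0), 0) := by
      refine Prod.ext (funext fun w => ?_) ?_
      · show a.1 w = (if w = v then 1 else 0) + (a.1 w - (if w = v then 1 else 0))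
        by_cases hwv : w = v
        · subst hwv; simp; omega
        · simp [hwv]
      · show a.2 = 0 + 0
        simp [hg]
    rcases hatom _ _ hb hc hsum with h | h
    · exfalso
      have := congrFun (congrArg Prod.fst h) v
      simp at this
    · refine ⟨v, ?_⟩
      refine Prod.ext (funext fun w => ?_) hg
      have hw := congrFun (congrArg Prod.fst h) w
      simp only at hw
      show a.1 w = if w = v then 1 else 0
      by_cases hwv : w = v
      · subst hwv; simp at hw ⊢; omega
      · simp [hwv] at hw ⊢; omega
  · right
    have hble1 : ∀ v, (if ∃ e, a.2 e ≠ 0 ∧ v ∈ r e then 1 else 0) ≤ a.1 v := by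
      intro v
      split_ifs with h
      · obtain ⟨e, he, hve⟩ := h
        have := haA e v hve
        omega
      · exact Nat.zero_le _
    have hb : IsAgg r ((fun v => if ∃ e, a.2 e ≠ 0 ∧ v ∈ r e then 1 else 0,
        fun e => min (a.2 e) 1) : (V → ℕ) × (E → ℕ)) := by
      intro e v hv
      show min (a.2 e) 1 ≤ if ∃ e', a.2 e' ≠ 0 ∧ v ∈ r e' then 1 else 0
      by_cases h0 : a.2 e = 0
      · simp [h0]
      · rw [if_pos ⟨e, h0, hv⟩]
        omega
    have hc : IsAgg r ((fun v => a.1 v - (if ∃ e, a.2 e ≠ 0 ∧ v ∈ r e then 1 else 0),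
        fun e => a.2 e - min (a.2 e) 1) : (V → ℕ) × (E → ℕ)) := by
      intro e v hv
      show a.2 e - min (a.2 e) 1 ≤ a.1 v - (if ∃ e', a.2 e' ≠ 0 ∧ v ∈ r e' then 1 else 0)
      by_cases h0 : a.2 e = 0
      · simp [h0]
      · rw [if_pos ⟨e, h0, hv⟩]
        have := haA e v hv
        omega
    have hsum : a = ((fun v => if ∃ e, a.2 e ≠ 0 ∧ v ∈ r e then 1 else 0,
          fun e => min (a.2 e) 1) : (V → ℕ) × (E → ℕ))
        + (fun v => a.1 v - (if ∃ e, a.2 e ≠ 0 ∧ v ∈ r e then 1 else 0),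
          fun e => a.2 e - min (a.2 e) 1) := by
      refine Prod.ext (funext fun v => ?_) (funext fun e => ?_)
      · show a.1 v = (if ∃ e, a.2 e ≠ 0 ∧ v ∈ r e then 1 else 0)
            + (a.1 v - (if ∃ e, a.2 e ≠ 0 ∧ v ∈ r e then 1 else 0))
        have := hble1 v
        omega
      · show a.2 e = min (a.2 e) 1 + (a.2 e - min (a.2 e) 1)
        omega
    rcases hatom _ _ hb hc hsum with h | h
    · exfalso
      obtain ⟨e, he⟩ : ∃ e, a.2 e ≠ 0 := by
        by_contra h'
        push_neg at h'
        exact hg (funext fun e => h' e)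
      have := congrFun (congrArg Prod.snd h) e
      simp only at this
      simp only [Prod.fst_zero, Prod.snd_zero, Pi.zero_apply] at this
      omega
    · constructor
      · intro e
        have := congrFun (congrArg Prod.snd h) e
        simp only at this
        simp only [Prod.fst_zero, Prod.snd_zero, Pi.zero_apply] at this
        omega
      · intro v
        have := congrFun (congrArg Prod.fst h) v
        simp only at this
        simp only [Prod.fst_zero, Prod.snd_zero, Pi.zero_apply] at this
        have h2 := hble1 v
        omega

open Classical in
/-- If an atom is a summand of `n • b`, then it is a summand of `b`. -/
lemma agg_atom_summand {V E : Type*} (r : E → Sym2 V) (a : (V → ℕ) × (E → ℕ))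
    (ha : IsAtomAgg r a) (b : (V → ℕ) × (E → ℕ)) (n : ℕ) (hb : IsAgg r b)
    (hn : 1 ≤ n) (h : IsSummandAgg r a (n • b)) : IsSummandAgg r a b := by
  classical
  obtain ⟨c, hc, hsum⟩ := h
  have h1 : ∀ v, n * b.1 v = a.1 v + c.1 v := by
    intro v
    have := congrFun (congrArg Prod.fst hsum) v
    simpa [Pi.smul_apply] using this
  have h2 : ∀ e, n * b.2 e = a.2 e + c.2 e := by
    intro e
    have := congrFun (congrArg Prod.snd hsum) e
    simpa [Pi.smul_apply] using this
  rcases agg_atom_char r a ha with ⟨v, hav⟩ | ⟨hgle, hfeq⟩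
  · -- vertex atom
    have ha1 : ∀ w, a.1 w = if w = v then 1 else 0 := by
      intro w; rw [hav]
    have ha2 : ∀ e, a.2 e = 0 := by
      intro e; rw [hav]; rfl
    have hv1 : 1 ≤ b.1 v := by
      rcases Nat.eq_zero_or_pos (b.1 v) with h0 | h0
      · exfalso
        have := h1 v
        rw [h0, ha1 v, if_pos rfl] at this
        omega
      · exact h0
    have hstrict : ∀ e, v ∈ r e → b.2 e < b.1 v := by
      intro e hve
      have he2 := h2 e
      have he1 := h1 v
      rw [ha2 e] at he2
      rw [ha1 v, if_pos rfl] at he1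
      have hcc := hc e v hve
      have hmul : n * b.2 e < n * b.1 v := by
        set X := n * b.2 e with hX
        set Y := n * b.1 v with hY
        omega
      exact lt_of_mul_lt_mul_left hmul (Nat.zero_le n)
    refine ⟨(fun w => b.1 w - (if w = v then 1 else 0), b.2), ?_, ?_⟩
    · intro e w hwe
      show b.2 e ≤ b.1 w - (if w = v then 1 else 0)
      by_cases hwv : w = v
      · subst hwv
        have := hstrict e hwe
        simp
        omega
      · rw [if_neg hwv]
        simpa using hb e w hwe
    · refine Prod.ext (funext fun w => ?_) (funext fun e => ?_)
      · show b.1 w = a.1 w + (b.1 w - (if w = v then 1 else 0))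
        rw [ha1 w]
        by_cases hwv : w = v
        · subst hwv; simp; omega
        · simp [hwv]
      · show b.2 e = a.2 e + b.2 e
        rw [ha2 e]
        omega
  · -- edge atom
    have hfb : ∀ v, a.1 v ≤ b.1 v := by
      intro v
      have hv01 : a.1 v ≤ 1 := by rw [hfeq v]; split_ifs <;> omega
      rcases Nat.eq_zero_or_pos (a.1 v) with h0 | h0
      · omega
      · have hav : a.1 v = 1 := by omega
        rcases Nat.eq_zero_or_pos (b.1 v) with hb0 | hb0
        · exfalso
          have := h1 v
          rw [hb0, hav] at this
          omega
        · omega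
    have hgb : ∀ e, a.2 e ≤ b.2 e := by
      intro e
      rcases Nat.eq_zero_or_pos (a.2 e) with h0 | h0
      · omega
      · have hae : a.2 e = 1 := by have := hgle e; omega
        rcases Nat.eq_zero_or_pos (b.2 e) with hb0 | hb0
        · exfalso
          have := h2 e
          rw [hb0, hae] at this
          omega
        · omega
    refine ⟨(fun v => b.1 v - a.1 v, fun e => b.2 e - a.2 e), ?_, ?_⟩
    · intro e v hv
      show b.2 e - a.2 e ≤ b.1 v - a.1 v
      have hbb := hb e v hv
      rcases Nat.eq_zero_or_pos (a.1 v) with hv0 | hv0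
      · -- then a.2 e = 0
        have : a.2 e = 0 := by
          by_contra h0
          have := hfeq v
          rw [if_pos ⟨e, h0, hv⟩] at this
          omega
        omega
      · have hav : a.1 v = 1 := by
          have : a.1 v ≤ 1 := by rw [hfeq v]; split_ifs <;> omega
          omega
        rcases Nat.eq_zero_or_pos (a.2 e) with he0 | he0
        · -- need strict: b.2 e < b.1 v
          have he2 := h2 e
          have he1 := h1 v
          rw [he0] at he2
          rw [hav] at he1
          have hcc := hc e v hv
          have hmul : n * b.2 e < n * b.1 v := by
            set X := n * b.2 e with hX
            set Y := n * b.1 v with hY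
            omega
          have := lt_of_mul_lt_mul_left hmul (Nat.zero_le n)
          omega
        · have : a.2 e = 1 := by have := hgle e; omega
          have := hgb e
          omega
    · refine Prod.ext (funext fun v => ?_) (funext fun e => ?_)
      · show b.1 v = a.1 v + (b.1 v - a.1 v)
        have := hfb v
        omega
      · show b.2 e = a.2 e + (b.2 e - a.2 e)
        have := hgb e
        omega

/-- **Absolute irreducibility of atoms**: if an atom `a` of `A(G)` is a summand of `n·b`
(`n ≥ 1`), then it is a summand of `b`; consequently the only factorization of `n·a` into
atoms is `a + ⋯ + a` (`n` times). -/
theorem atoms_absolutely_irreducible {V E : Type*} [Fintype V] [Fintype E]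
    (r : E → Sym2 V) (hr : ∀ e : E, ¬ (r e).IsDiag)
    (a : (V → ℕ) × (E → ℕ)) (ha : IsAtomAgg r a) :
    (∀ (b : (V → ℕ) × (E → ℕ)) (n : ℕ), IsAgg r b → 1 ≤ n →
      IsSummandAgg r a (n • b) → IsSummandAgg r a b) ∧
    (∀ n : ℕ, 1 ≤ n → ∀ (k : ℕ) (b : Fin k → (V → ℕ) × (E → ℕ)),
      (∀ i, IsAtomAgg r (b i)) → n • a = ∑ i, b i → k = n ∧ ∀ i, b i = a) := by
  classical
  constructor
  · intro b n hbagg hn hsummand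
    exact agg_atom_summand r a ha b n hbagg hn hsummand
  · intro n hn k b hbatoms hsum
    have hbi_eq : ∀ i, b i = a := by
      intro i
      have hsummand : IsSummandAgg r (b i) (n • a) := by
        refine ⟨∑ j ∈ Finset.univ.erase i, b j, ?_, ?_⟩
        · refine Finset.sum_induction _ (IsAgg r) ?_ ?_ ?_
          · intro x y hx hy e v hv
            exact add_le_add (hx e v hv) (hy e v hv)
          · intro e v hv
            exact le_refl 0
          · intro j _
            exact (hbatoms j).1
        · rw [hsum, ← Finset.add_sum_erase _ _ (Finset.mem_univ i)]
      obtain ⟨c, hcagg, hac⟩ :=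
        agg_atom_summand r (b i) (hbatoms i) a n ha.1 hn hsummand
      rcases ha.2.2 (b i) c (hbatoms i).1 hcagg hac with h | h
      · exact absurd h (hbatoms i).2.1
      · rw [h, add_zero] at hac
        exact hac.symm
    have hka : n • a = k • a := by
      rw [hsum]
      simp [hbi_eq]
    have hnk : n = k := by
      have hne := ha.2.1
      have hx : ∃ x : ℕ, x ≠ 0 ∧ n * x = k * x := by
        by_cases h1 : a.1 = 0
        · have h2 : a.2 ≠ 0 := fun h => hne (Prod.ext h1 h)
          obtain ⟨e, he⟩ : ∃ e, a.2 e ≠ 0 := by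
            by_contra h'
            push_neg at h'
            exact h2 (funext fun e => h' e)
          refine ⟨a.2 e, he, ?_⟩
          have := congrFun (congrArg Prod.snd hka) e
          simpa [Pi.smul_apply] using this
        · obtain ⟨v, hv⟩ : ∃ v, a.1 v ≠ 0 := by
            by_contra h'
            push_neg at h'
            exact h1 (funext fun v => h' v)
          refine ⟨a.1 v, hv, ?_⟩
          have := congrFun (congrArg Prod.fst hka) v
          simpa [Pi.smul_apply] using this
      obtain ⟨x, hx0, hmul⟩ := hx
      exact Nat.eq_of_mul_eq_mul_right (Nat.pos_of_ne_zero hx0) hmul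
    exact ⟨hnk.symm, hbi_eq⟩
end

section
/- Unique factorization for disjoint connected subgraphs: Let G = (V,E,r) be a graph and let (V₁,E₁), …, (V_s,E_s) be subgraphs of G (both endpoints of each e ∈ E_i lie in V_i) that are pairwise vertex-disjoint and each connected with V_i nonempty. Let a = 1_{(V₁,E₁)} + ⋯ + 1_{(V_s,E_s)} ∈ A(G), where 1_{(V_i,E_i)} denotes the indicator agglomeration of (V_i,E_i). Then a factors uniquely into atoms: whenever a = b₁ + ⋯ + b_l with all b_j atoms of A(G), we have l = s and, after a permutation, b_j = 1_{(V_j,E_j)} for all j. -/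
/-- **Unique factorization for disjoint connected subgraphs**: if `(V₁,E₁), …, (V_s,E_s)`
are pairwise vertex-disjoint connected subgraphs of `G`, then the sum of their indicators
factors uniquely (up to permutation) into atoms, namely as the sum of these indicators. -/
theorem unique_factorization_disjoint_subgraphs {V E : Type*} [Fintype V] [Fintype E]
    (r : E → Sym2 V) (hr : ∀ e : E, ¬ (r e).IsDiag)
    (s : ℕ) (Vs : Fin s → Set V) (Es : Fin s → Set E)
    (hsub : ∀ i, ∀ e ∈ Es i, ∀ v : V, v ∈ r e → v ∈ Vs i)
    (hdisj : ∀ i j, i ≠ j → Disjoint (Vs i) (Vs j))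
    (hne : ∀ i, (Vs i).Nonempty)
    (hconn : ∀ i, ∀ x ∈ Vs i, ∀ y ∈ Vs i, AggJoined r (Es i) x y)
    (a : (V → ℕ) × (E → ℕ))
    (ha : a = ∑ i, ((Vs i).indicator 1, (Es i).indicator 1)) :
    ∀ (l : ℕ) (b : Fin l → (V → ℕ) × (E → ℕ)),
      (∀ j, IsAtomAgg r (b j)) → a = ∑ j, b j →
      l = s ∧ ∃ σ : Fin l ≃ Fin s, ∀ j,
        b j = ((Vs (σ j)).indicator 1, (Es (σ j)).indicator 1) := by
  classical
  intro l b hb hab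
  -- unique membership helper
  have hdis : ∀ i i' (v : V), v ∈ Vs i → v ∈ Vs i' → i = i' := by
    intro i i' v hv hv'
    by_contra h
    exact Set.disjoint_left.mp (hdisj i i' h) hv hv'
  -- component formulas for a
  have haV : ∀ v, a.1 v = ∑ i, (Vs i).indicator 1 v := by
    intro v; rw [ha, Prod.fst_sum, Finset.sum_apply]
  have haE : ∀ e, a.2 e = ∑ i, (Es i).indicator 1 e := by
    intro e; rw [ha, Prod.snd_sum, Finset.sum_apply]
  have hV1 : ∀ i (v : V), v ∈ Vs i → a.1 v = 1 := by
    intro i v hv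
    rw [haV]
    rw [Finset.sum_eq_single i]
    · simp [Set.indicator_of_mem hv]
    · intro j _ hj
      have : v ∉ Vs j := fun hvj => hj (hdis j i v hvj hv)
      simp [Set.indicator_of_notMem this]
    · simp
  have hE1 : ∀ i (e : E), e ∈ Es i → a.2 e = 1 := by
    intro i e he
    rw [haE]
    rw [Finset.sum_eq_single i]
    · simp [Set.indicator_of_mem he]
    · intro j _ hj
      have : e ∉ Es j := by
        intro hej
        have hv1 : (r e).out.1 ∈ Vs i := hsub i e he _ (Sym2.out_fst_mem _)
        have hv2 : (r e).out.1 ∈ Vs j := hsub j e hej _ (Sym2.out_fst_mem _)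
        exact hj (hdis j i _ hv2 hv1)
      simp [Set.indicator_of_notMem this]
    · simp
  have hVmem : ∀ v : V, a.1 v ≠ 0 → ∃ i, v ∈ Vs i := by
    intro v hv
    by_contra h
    push_neg at h
    apply hv
    rw [haV]
    exact Finset.sum_eq_zero fun i _ => Set.indicator_of_notMem (h i) _
  have hEmem : ∀ e : E, a.2 e ≠ 0 → ∃ i, e ∈ Es i := by
    intro e he
    by_contra h
    push_neg at h
    apply he
    rw [haE]
    exact Finset.sum_eq_zero fun i _ => Set.indicator_of_notMem (h i) _
  have haVle : ∀ v : V, a.1 v ≤ 1 := by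
    intro v
    by_cases h : a.1 v = 0
    · omega
    · obtain ⟨i, hi⟩ := hVmem v h
      exact (hV1 i v hi).le
  -- sums of the b's
  have hbV : ∀ v, ∑ j, (b j).1 v = a.1 v := by
    intro v; rw [hab, Prod.fst_sum, Finset.sum_apply]
  have hbE : ∀ e, ∑ j, (b j).2 e = a.2 e := by
    intro e; rw [hab, Prod.snd_sum, Finset.sum_apply]
  have hbleV : ∀ j (v : V), (b j).1 v ≤ a.1 v := by
    intro j v
    rw [← hbV]
    exact Finset.single_le_sum (f := fun j => (b j).1 v) (fun _ _ => Nat.zero_le _) (Finset.mem_univ j)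
  have hbleE : ∀ j (e : E), (b j).2 e ≤ a.2 e := by
    intro j e
    rw [← hbE]
    exact Finset.single_le_sum (f := fun j => (b j).2 e) (fun _ _ => Nat.zero_le _) (Finset.mem_univ j)
  -- at each vertex at most one b j is nonzero
  have huniqV : ∀ (v : V) (j1 j2 : Fin l), (b j1).1 v ≠ 0 → (b j2).1 v ≠ 0 → j1 = j2 := by
    intro v j1 j2 h1 h2
    by_contra hne'
    have h2' : (b j2).1 v ≤ ∑ j ∈ Finset.univ.erase j1, (b j).1 v :=
      Finset.single_le_sum (f := fun j => (b j).1 v) (fun _ _ => Nat.zero_le _)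
        (Finset.mem_erase.mpr ⟨fun h => hne' h.symm, Finset.mem_univ _⟩)
    have hsum : (b j1).1 v + ∑ j ∈ Finset.univ.erase j1, (b j).1 v = ∑ j, (b j).1 v :=
      Finset.add_sum_erase _ (fun j => (b j).1 v) (Finset.mem_univ j1)
    have := haVle v
    rw [← hbV] at this
    omega
  -- nonempty vertex support of each atom
  have hsupp : ∀ j, ∃ v, (b j).1 v ≠ 0 := by
    intro j
    by_contra h
    push_neg at h
    apply (hb j).2.1
    have hE0 : ∀ e, (b j).2 e = 0 := by
      intro e
      have := (hb j).1 e (r e).out.1 (Sym2.out_fst_mem _)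
      rw [h] at this
      omega
    exact Prod.ext (funext h) (funext hE0)
  -- support localization: each atom lives in a single subgraph
  have hloc : ∀ j, ∃ i, (∀ v, (b j).1 v ≠ 0 → v ∈ Vs i) ∧ (∀ e, (b j).2 e ≠ 0 → e ∈ Es i) := by
    intro j
    obtain ⟨v0, hv0⟩ := hsupp j
    have ha0 : a.1 v0 ≠ 0 := fun h => hv0 (Nat.le_zero.mp (h ▸ hbleV j v0))
    obtain ⟨i, hi⟩ := hVmem v0 ha0
    refine ⟨i, ?_⟩
    set c : (V → ℕ) × (E → ℕ) :=
      (fun v => if v ∈ Vs i then (b j).1 v else 0,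
       fun e => if e ∈ Es i then (b j).2 e else 0) with hc_def
    set d : (V → ℕ) × (E → ℕ) :=
      (fun v => if v ∈ Vs i then 0 else (b j).1 v,
       fun e => if e ∈ Es i then 0 else (b j).2 e) with hd_def
    have hcd : b j = c + d := by
      refine Prod.ext (funext fun v => ?_) (funext fun e => ?_)
      · show (b j).1 v = (if v ∈ Vs i then (b j).1 v else 0) + (if v ∈ Vs i then 0 else (b j).1 v)
        split <;> simp
      · show (b j).2 e = (if e ∈ Es i then (b j).2 e else 0) + (if e ∈ Es i then 0 else (b j).2 e)
        split <;> simp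
    have hc : IsAgg r c := by
      intro e v hv
      show (if e ∈ Es i then (b j).2 e else 0) ≤ (if v ∈ Vs i then (b j).1 v else 0)
      by_cases he : e ∈ Es i
      · have : v ∈ Vs i := hsub i e he v hv
        simp only [if_pos he, if_pos this]
        exact (hb j).1 e v hv
      · simp [he]
    have hd : IsAgg r d := by
      intro e v hv
      show (if e ∈ Es i then 0 else (b j).2 e) ≤ (if v ∈ Vs i then 0 else (b j).1 v)
      by_cases he : e ∈ Es i
      · simp [he]
      · simp only [if_neg he]
        by_cases hvi : v ∈ Vs i
        · simp only [if_pos hvi]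
          by_contra hpos
          have hbe : (b j).2 e ≠ 0 := by omega
          have hae : a.2 e ≠ 0 := fun h0 => hbe (Nat.le_zero.mp (h0 ▸ hbleE j e))
          obtain ⟨i', hi'⟩ := hEmem e hae
          have : v ∈ Vs i' := hsub i' e hi' v hv
          exact he ((hdis i' i v this hvi) ▸ hi')
        · simp only [if_neg hvi]
          exact (hb j).1 e v hv
    rcases (hb j).2.2 c d hc hd hcd with h | h
    · exfalso
      have : c.1 v0 = 0 := by rw [h]; rfl
      simp only [hc_def, if_pos hi] at this
      exact hv0 this
    · have hdV : ∀ v, v ∉ Vs i → (b j).1 v = 0 := by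
        intro v hv
        have : d.1 v = 0 := by rw [h]; rfl
        simpa only [hd_def, if_neg hv] using this
      have hdE : ∀ e, e ∉ Es i → (b j).2 e = 0 := by
        intro e he
        have : d.2 e = 0 := by rw [h]; rfl
        simpa only [hd_def, if_neg he] using this
      exact ⟨fun v hv => by_contra fun hvn => hv (hdV v hvn),
             fun e he => by_contra fun hen => he (hdE e hen)⟩
  choose F hFV hFE using hloc
  -- existence of a nonzero b j at each vertex of some Vs i
  have hexV : ∀ (i : Fin s) (v : V), v ∈ Vs i → ∃ j, (b j).1 v ≠ 0 := by
    intro i v hv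
    by_contra h
    push_neg at h
    have : (1 : ℕ) = 0 := by
      rw [← hV1 i v hv, ← hbV]
      exact Finset.sum_eq_zero fun j _ => h j
    omega
  have hexE : ∀ (i : Fin s) (e : E), e ∈ Es i → ∃ j, (b j).2 e ≠ 0 := by
    intro i e he
    by_contra h
    push_neg at h
    have : (1 : ℕ) = 0 := by
      rw [← hE1 i e he, ← hbE]
      exact Finset.sum_eq_zero fun j _ => h j
    omega
  -- injectivity of F via connectedness
  have hFinj : Function.Injective F := by
    intro j1 j2 hF
    obtain ⟨v1, hv1⟩ := hsupp j1
    obtain ⟨v2, hv2⟩ := hsupp j2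
    have hm1 : v1 ∈ Vs (F j1) := hFV j1 v1 hv1
    have hm2 : v2 ∈ Vs (F j1) := hF ▸ hFV j2 v2 hv2
    have walk : Relation.ReflTransGen (fun x y => ∃ e ∈ Es (F j1), r e = s(x, y)) v1 v2 :=
      hconn (F j1) v1 hm1 v2 hm2
    have key : (b j1).1 v2 ≠ 0 := by
      clear hm2 hv2
      induction walk with
      | refl => exact hv1
      | tail _ hstep ih =>
        rename_i x y _
        obtain ⟨e, he, hre⟩ := hstep
        have hxe : x ∈ r e := by rw [hre]; exact Sym2.mem_mk_left x y
        have hye : y ∈ r e := by rw [hre]; exact Sym2.mem_mk_right x y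
        obtain ⟨j', hj'⟩ := hexE (F j1) e he
        have hj'x : (b j').1 x ≠ 0 := by
          have := (hb j').1 e x hxe
          omega
        have : j' = j1 := huniqV x j' j1 hj'x ih
        subst this
        have := (hb j').1 e y hye
        omega
    exact huniqV v2 j1 j2 key hv2
  have hFsurj : Function.Surjective F := by
    intro i
    obtain ⟨v, hv⟩ := hne i
    obtain ⟨j, hj⟩ := hexV i v hv
    exact ⟨j, hdis (F j) i v (hFV j v hj) hv⟩
  have hbij : Function.Bijective F := ⟨hFinj, hFsurj⟩
  have hls : l = s := by
    have := Fintype.card_congr (Equiv.ofBijective F hbij)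
    simpa using this
  refine ⟨hls, Equiv.ofBijective F hbij, fun j => ?_⟩
  have hσ : Equiv.ofBijective F hbij j = F j := rfl
  rw [hσ]
  refine Prod.ext (funext fun v => ?_) (funext fun e => ?_)
  · by_cases hv : v ∈ Vs (F j)
    · obtain ⟨j', hj'⟩ := hexV (F j) v hv
      have hFj' : F j' = F j := hdis (F j') (F j) v (hFV j' v hj') hv
      have : j' = j := hFinj hFj'
      subst this
      have h1 := hbleV j' v
      rw [hV1 (F j') v hv] at h1
      have : (b j').1 v = 1 := by omega
      rw [this]
      simp [Set.indicator_of_mem hv]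
    · have : (b j).1 v = 0 := by_contra fun h => hv (hFV j v h)
      rw [this]
      simp [Set.indicator_of_notMem hv]
  · by_cases he : e ∈ Es (F j)
    · obtain ⟨j', hj'⟩ := hexE (F j) e he
      have hve : (r e).out.1 ∈ r e := Sym2.out_fst_mem _
      have hj'v : (b j').1 (r e).out.1 ≠ 0 := by
        have := (hb j').1 e _ hve
        omega
      have hm1 : (r e).out.1 ∈ Vs (F j') := hFV j' _ hj'v
      have hm2 : (r e).out.1 ∈ Vs (F j) := hsub (F j) e he _ hve
      have : j' = j := hFinj (hdis (F j') (F j) _ hm1 hm2)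
      subst this
      have h1 := hbleE j' e
      rw [hE1 (F j') e he] at h1
      have : (b j').2 e = 1 := by omega
      rw [this]
      simp [Set.indicator_of_mem he]
    · have : (b j).2 e = 0 := by_contra fun h => he (hFE j e h)
      rw [this]
      simp [Set.indicator_of_notMem he]
end
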